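/- arXiv:2408.06992 — 9 statements merged into one kernel-verified Lean document; each statement's English description precedes it below -/
import Mathlib

section
/- Let T be a tournament with n vertices and skew-adjacency matrix S_T. If n is odd, then det(S_T) = 0, and if n is even, then det(S_T) is the square of an odd integer. -/
open scoped Classical

/-- A tournament: irreflexive, and between distinct vertices exactly one arc. -/
def IsTournament {V : Type*} (r : V → V → Prop) : Prop :=
  (∀ i, ¬ r i i) ∧ ∀ i j, i ≠ j → (r i j ↔ ¬ r j i)

/-- Skew-adjacency matrix of a relation. -/
noncomputable def skew {V : Type*} (r : V → V → Prop) : Matrix V V ℤ :=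
  Matrix.of fun i j => if r i j then 1 else if r j i then -1 else 0

/-- Determinant of the skew-adjacency matrix. -/
noncomputable def tdet {V : Type*} [Fintype V] [DecidableEq V] (r : V → V → Prop) : ℤ :=
  (skew r).det

/-- Determinant of the subtournament induced by a finite vertex subset. -/
noncomputable def subdet {V : Type*} [Fintype V] [DecidableEq V] (r : V → V → Prop)
    (s : Finset V) : ℤ :=
  ((skew r).submatrix (fun x : {x // x ∈ s} => x.1) (fun x : {x // x ∈ s} => x.1)).det

/-- Switch of `r` with respect to `W`: arcs between `W` and its complement are reversed. -/
def switchRel {V : Type*} (r : V → V → Prop) (W : Set V) : V → V → Prop :=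
  fun i j => if (i ∈ W ↔ j ∈ W) then r i j else r j i

/-- Switching equivalence of two tournaments on the same vertex set. -/
def SwitchEquiv {V : Type*} (r₁ r₂ : V → V → Prop) : Prop :=
  ∃ W : Set V, ∀ i j, r₂ i j ↔ switchRel r₁ W i j

def IsTransitive {V : Type*} (r : V → V → Prop) : Prop :=
  ∀ a b c, r a b → r b c → r a c

def IsTransitiveOn {V : Type*} (r : V → V → Prop) (X : Finset V) : Prop :=
  ∀ a ∈ X, ∀ b ∈ X, ∀ c ∈ X, r a b → r b c → r a c

/-- A 4-set inducing a diamond: a vertex dominating or dominated by a 3-cycle. -/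
def IsDiamond {V : Type*} (r : V → V → Prop) (X : Finset V) : Prop :=
  ∃ a b c d : V, X = {a, b, c, d} ∧ a ≠ b ∧ a ≠ c ∧ a ≠ d ∧ b ≠ c ∧ b ≠ d ∧ c ≠ d ∧
    r b c ∧ r c d ∧ r d b ∧ ((r a b ∧ r a c ∧ r a d) ∨ (r b a ∧ r c a ∧ r d a))

/-- Number of diamonds of a tournament. -/
noncomputable def numDiamonds {V : Type*} [Fintype V] (r : V → V → Prop) : ℕ :=
  Set.ncard {X : Finset V | IsDiamond r X}

/-- The tournament `L_n`: a transitive chain `u_0 → ⋯ → u_{n-2}` together with a last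
vertex alternating along the chain, starting with `u_{n-1} → u_0`. -/
def LRel (n : ℕ) : Fin n → Fin n → Prop := fun i j =>
  (j.val < n - 1 ∧ i.val < j.val) ∨
  (j.val = n - 1 ∧ i.val < n - 1 ∧ i.val % 2 = 1) ∨
  (i.val = n - 1 ∧ j.val < n - 1 ∧ j.val % 2 = 0)

/-- Join of two tournaments: all arcs from the first to the second. -/
def joinRel {A B : Type*} (r : A → A → Prop) (s : B → B → Prop) : A ⊕ B → A ⊕ B → Prop :=
  fun x y => match x, y with
  | .inl a, .inl a' => r a a'
  | .inr b, .inr b' => s b b'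
  | .inl _, .inr _ => True
  | .inr _, .inl _ => False

/-- `T⁺`: add one new vertex dominated by every vertex of `T`. -/
def plusRel {A : Type*} (r : A → A → Prop) : Option A → Option A → Prop :=
  fun x y => match x, y with
  | some a, some b => r a b
  | some _, none => True
  | _, _ => False

/-- Blowup of `r` by the family of tournaments `t`. -/
def blowupG {ι : Type*} [DecidableEq ι] (r : ι → ι → Prop) {κ : ι → Type*}
    (t : ∀ i, κ i → κ i → Prop) : (Σ i, κ i) → (Σ i, κ i) → Prop :=
  fun x y => if h : x.1 = y.1 then t y.1 (h ▸ x.2) y.2 else r x.1 y.1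

/-- Transitive `(a_1,…,a_n)`-blowup of `r`. -/
def blowup {ι : Type*} [DecidableEq ι] (r : ι → ι → Prop) (a : ι → ℕ) :
    (Σ i, Fin (a i)) → (Σ i, Fin (a i)) → Prop :=
  blowupG r (fun _ p q => p < q)

/-- Membership in `𝒟_k`: every subtournament has determinant at most `k²`. -/
def memD {V : Type*} [Fintype V] [DecidableEq V] (r : V → V → Prop) (k : ℕ) : Prop :=
  ∀ s : Finset V, subdet r s ≤ (k : ℤ) ^ 2

/-!
Over a field of characteristic zero, a skew-symmetric matrix satisfies `det A = (-1)^n det A`, so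
its determinant vanishes in odd size. In even size, a nonzero entry `a = A i j` spans a `2 × 2`
block of determinant `a²` whose Schur complement is again skew-symmetric, so by induction
`det A` is a square. The skew-adjacency matrix of a tournament is `J - I` modulo 2, whose
determinant is `1 + n`, odd for even `n`; and an integer that is a square in `ℚ` is a square
in `ℤ`.
-/

lemma exists_finTwo_sum_equiv {ι : Type*} [Fintype ι] [DecidableEq ι] {i j : ι}
    (hij : i ≠ j) :
    ∃ e : Fin 2 ⊕ Fin (Fintype.card ι - 2) ≃ ι, e (.inl 0) = i ∧ e (.inl 1) = j := by
  have hcard : Fintype.card (Fin 2 ⊕ Fin (Fintype.card ι - 2)) = Fintype.card ι := by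
    have := Fintype.one_lt_card_iff_nontrivial.mpr ⟨i, j, hij⟩
    simp only [Fintype.card_sum, Fintype.card_fin]
    omega
  let e := Fintype.equivOfCardEq hcard
  let e₀ := e.trans (Equiv.swap (e (.inl 0)) i)
  have he₀ : e₀ (.inl 0) = i := by simp [e₀]
  refine ⟨e₀.trans (Equiv.swap (e₀ (.inl 1)) j), ?_, by simp⟩
  rw [Equiv.trans_apply, he₀]
  refine Equiv.swap_apply_of_ne_of_ne ?_ hij
  rw [← he₀, Ne, e₀.apply_eq_iff_eq]
  simp

namespace Matrix

variable {ι κ R K : Type*}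

open scoped CharZero in
lemma diag_eq_zero_of_transpose_eq_neg [Ring R] [NoZeroDivisors R] [CharZero R]
    {A : Matrix ι ι R} (hA : Aᵀ = -A) (i : ι) : A i i = 0 := by
  simpa using congrFun₂ hA i i

variable [Fintype ι] [DecidableEq ι]

lemma det_eq_zero_of_transpose_eq_neg [CommRing R] [NoZeroDivisors R] [CharZero R]
    {A : Matrix ι ι R} (hA : Aᵀ = -A) (hι : Odd (Fintype.card ι)) : A.det = 0 := by
  refine CharZero.eq_neg_self_iff.mp ?_
  calc A.det = Aᵀ.det := (det_transpose A).symm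
    _ = -A.det := by rw [hA, det_neg, hι.neg_one_pow, neg_one_mul]

lemma transpose_invOf_eq_neg [CommRing R] {A : Matrix ι ι R} [Invertible A] (hA : Aᵀ = -A) :
    (⅟A)ᵀ = -⅟A := by
  have h : ⅟A = -(⅟A)ᵀ := invOf_eq_right_inv <| by
    rw [Matrix.mul_neg, ← neg_mul, ← hA, ← transpose_mul, invOf_mul_self, transpose_one]
  conv_rhs => rw [h, neg_neg]

lemma transpose_schur_eq_neg [CommRing R] {A : Matrix ι ι R} [Invertible A]
    {B : Matrix ι κ R} {C : Matrix κ ι R} {D : Matrix κ κ R}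
    (hA : Aᵀ = -A) (hB : Bᵀ = -C) (hD : Dᵀ = -D) :
    (D - C * ⅟A * B)ᵀ = -(D - C * ⅟A * B) := by
  have hC : Cᵀ = -B := by
    rw [← transpose_transpose B, hB, transpose_neg, neg_neg]
  rw [transpose_sub, transpose_mul, transpose_mul, transpose_invOf_eq_neg hA, hB, hC, hD]
  simp only [Matrix.neg_mul, Matrix.mul_neg, neg_neg, Matrix.mul_assoc, sub_eq_add_neg, neg_add]

variable [Fintype κ] [DecidableEq κ]

lemma exists_det_eq_sq_mul_det_of_transpose_eq_neg [Field K] [CharZero K]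
    {M : Matrix (Fin 2 ⊕ κ) (Fin 2 ⊕ κ) K} (hM : Mᵀ = -M)
    (h01 : M (.inl 0) (.inl 1) ≠ 0) :
    ∃ S : Matrix κ κ K, Sᵀ = -S ∧ M.det = M (.inl 0) (.inl 1) ^ 2 * S.det := by
  rw [← fromBlocks_toBlocks M, fromBlocks_transpose, fromBlocks_neg] at hM
  obtain ⟨h₁₁, -, h₁₂, h₂₂⟩ := fromBlocks_inj.mp hM
  have hdet : M.toBlocks₁₁.det = M (.inl 0) (.inl 1) ^ 2 := by
    have h10 := congrFun₂ h₁₁ 0 1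
    rw [transpose_apply, neg_apply] at h10
    rw [det_fin_two, diag_eq_zero_of_transpose_eq_neg h₁₁ 0,
      diag_eq_zero_of_transpose_eq_neg h₁₁ 1, h10]
    simp only [toBlocks₁₁, of_apply]
    ring
  have : Invertible M.toBlocks₁₁ :=
    M.toBlocks₁₁.invertibleOfIsUnitDet (by rw [hdet]; exact (pow_ne_zero 2 h01).isUnit)
  refine ⟨_, transpose_schur_eq_neg h₁₁ h₁₂ h₂₂, ?_⟩
  rw [← hdet, ← det_fromBlocks₁₁, fromBlocks_toBlocks]

/- Stated over `Fin n` so that the induction hypothesis applies to the Schur complement, which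
lives on `Fin (n - 2)` in a different universe from a general index type. -/
theorem isSquare_det_fin_of_transpose_eq_neg [Field K] [CharZero K] (n : ℕ) :
    ∀ {A : Matrix (Fin n) (Fin n) K}, Aᵀ = -A → Even n → IsSquare A.det := by
  induction n using Nat.strong_induction_on with
  | _ n ih =>
  intro A hA hn
  obtain rfl | hn0 := eq_or_ne n 0
  · simp
  by_cases hdet : A.det = 0
  · simp [hdet]
  obtain ⟨j, hj⟩ : ∃ j, A ⟨0, by omega⟩ j ≠ 0 := by
    by_contra! h
    exact hdet (det_eq_zero_of_row_eq_zero _ h)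
  have hij : ⟨0, by omega⟩ ≠ j := by
    rintro rfl
    exact hj (diag_eq_zero_of_transpose_eq_neg hA _)
  obtain ⟨e, he0, he1⟩ := exists_finTwo_sum_equiv hij
  have hM : (A.submatrix e e)ᵀ = -A.submatrix e e := by
    rw [transpose_submatrix, hA]
    rfl
  obtain ⟨S, hS, hdetM⟩ :=
    exists_det_eq_sq_mul_det_of_transpose_eq_neg hM (by simpa [he0, he1] using hj)
  obtain ⟨k, hk⟩ := hn
  have hSdet : IsSquare S.det :=
    ih (Fintype.card (Fin n) - 2) (by simp only [Fintype.card_fin]; omega) hS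
      ⟨k - 1, by simp only [Fintype.card_fin]; omega⟩
  rw [← det_submatrix_equiv_self e A, hdetM]
  exact (IsSquare.sq _).mul hSdet

theorem isSquare_det_of_transpose_eq_neg [Field K] [CharZero K] {A : Matrix ι ι K}
    (hA : Aᵀ = -A) (hι : Even (Fintype.card ι)) : IsSquare A.det := by
  let e := Fintype.equivFin ι
  rw [← det_submatrix_equiv_self e.symm A]
  refine isSquare_det_fin_of_transpose_eq_neg _ ?_ hι
  rw [transpose_submatrix, hA]
  rfl

end Matrix

namespace IsTournament

open Matrix

variable {V : Type*} {r : V → V → Prop}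

lemma skew_apply_of_ne (hT : IsTournament r) {i j : V} (hij : i ≠ j) :
    skew r i j = if r i j then 1 else -1 := by
  by_cases h : r i j
  · simp [skew, h]
  · simp [skew, h, (hT.2 j i hij.symm).mpr h]

lemma transpose_skew (hT : IsTournament r) : (skew r)ᵀ = -skew r := by
  ext i j
  obtain rfl | hij := eq_or_ne i j
  · simp [skew, hT.1 i]
  rw [transpose_apply, Matrix.neg_apply, hT.skew_apply_of_ne hij,
    hT.skew_apply_of_ne hij.symm]
  by_cases h : r i j
  · simp [h, (hT.2 i j hij).mp h]
  · simp [h, (hT.2 j i hij.symm).mpr h]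

lemma skew_map_intCast_zmod_two (hT : IsTournament r) [DecidableEq V] :
    (skew r).map (Int.cast : ℤ → ZMod 2) =
      1 + replicateCol Unit (1 : V → ZMod 2) * replicateRow Unit (1 : V → ZMod 2) := by
  ext i j
  obtain rfl | hij := eq_or_ne i j
  · simp [skew, hT.1 i, mul_apply]
    rfl
  · rw [map_apply, hT.skew_apply_of_ne hij]
    split_ifs <;> simp [hij, mul_apply]

variable [Fintype V] [DecidableEq V]

lemma odd_tdet (hT : IsTournament r) (hV : Even (Fintype.card V)) : Odd (tdet r) := by
  rw [← ZMod.intCast_eq_one_iff_odd, tdet, Int.cast_det, hT.skew_map_intCast_zmod_two,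
    det_one_add_replicateCol_mul_replicateRow]
  simp [dotProduct, (ZMod.natCast_eq_zero_iff_even).mpr hV]

lemma isSquare_tdet (hT : IsTournament r) (hV : Even (Fintype.card V)) : IsSquare (tdet r) := by
  rw [tdet, ← Rat.isSquare_intCast_iff, Int.cast_det]
  refine isSquare_det_of_transpose_eq_neg ?_ hV
  rw [← transpose_map, hT.transpose_skew, Matrix.map_neg _ Int.cast_neg]

end IsTournament

theorem stmt0 {V : Type*} [Fintype V] [DecidableEq V] (r : V → V → Prop)
    (hT : IsTournament r) :
    (Odd (Fintype.card V) → tdet r = 0) ∧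
    (Even (Fintype.card V) → ∃ m : ℤ, Odd m ∧ tdet r = m ^ 2) := by
  refine ⟨Matrix.det_eq_zero_of_transpose_eq_neg hT.transpose_skew, fun hV => ?_⟩
  obtain ⟨m, hm⟩ := hT.isSquare_tdet hV
  exact ⟨m, (Int.odd_mul.mp (hm ▸ hT.odd_tdet hV)).1, by rw [hm, sq]⟩
end

section
/- Let T1 and T2 be tournaments with p and q vertices respectively, both odd. Then det(T1 → T2) = det(T1^+) · det(T2^+), where T^+ denotes the join T → K_1 of T to a single new vertex dominated by all of T. -/
open scoped Classical

/-!
Write the skew-adjacency matrix of `T₁ → T₂` as `[[A, J], [-Jᵀ, B]]` with `J` the all-ones matrix.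
A congruence by `diag(P, Q)`, where `P`, `Q` are unimodular with `P 1 = e_a` and `Q 1 = e_b`, turns
`J` into the single entry `E_ab`. Expanding along rows `a` and `b` then gives
`det = det A * det B + (1ᵀ adj A 1) * (1ᵀ adj B 1)`.
Taking for `B` the `1 × 1` zero matrix shows `det (T⁺) = 1ᵀ adj A 1`, and `det A = 0`
because `A` is skew-symmetric of odd order.
-/

open Matrix

namespace Matrix

variable {R : Type*} [CommRing R] {m n : Type*} [Fintype m] [Fintype n] [DecidableEq m]
  [DecidableEq n]

theorem det_fromBlocks_single_neg_single (A : Matrix m m R) (B : Matrix n n R) (a : m) (b : n) :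
    det (fromBlocks A (single a b 1) (-single b a 1) B) =
      det A * det B + adjugate A a a * adjugate B b b := by
  set M := fromBlocks A (single a b 1) (-single b a 1) B
  set M₂ := M.updateRow (.inl a) (Sum.elim 0 (Pi.single b 1))
  have expand_row_a : det M = det (fromBlocks A 0 (-single b a 1) B) + det M₂ := by
    have hM : M = M.updateRow (.inl a)
        (Sum.elim (A a) 0 + Sum.elim (0 : m → R) (Pi.single b 1)) := by
      ext (i | i) (j | j) <;> simp [M, updateRow_apply, single_apply, Pi.single_apply] <;> grind
    have hM₁ : M.updateRow (.inl a) (Sum.elim (A a) 0) = fromBlocks A 0 (-single b a 1) B := by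
      ext (i | i) (j | j) <;> simp [M, updateRow_apply, single_apply] <;> grind
    rw [← hM₁, ← det_updateRow_add, ← hM]
  have expand_row_b : det M₂ = det (fromBlocks (A.updateRow a 0) (single a b 1) 0 B) +
      det ((fromBlocks (A.updateRow a ((-1 : R) • Pi.single a 1)) 0 0
        (B.updateRow b (Pi.single b 1))).submatrix (Equiv.swap (.inl a) (.inr b)) id) := by
    have hM₂₁ : M₂.updateRow (.inr b) (Sum.elim 0 (B b)) =
        fromBlocks (A.updateRow a 0) (single a b 1) 0 B := by
      ext (i | i) (j | j) <;> simp [M₂, M, updateRow_apply, single_apply, Pi.single_apply] <;> grind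
    have hM₂₂ : M₂.updateRow (.inr b) (Sum.elim (-Pi.single a 1) 0) =
        (fromBlocks (A.updateRow a ((-1 : R) • Pi.single a 1)) 0 0
          (B.updateRow b (Pi.single b 1))).submatrix (Equiv.swap (.inl a) (.inr b)) id := by
      ext (i | i) (j | j) <;> simp only [submatrix_apply, id, Equiv.swap_apply_def] <;>
        split_ifs <;> simp_all [M₂, M, updateRow_apply, single_apply, Pi.single_apply] <;> grind
    have hM₂ : M₂ = M₂.updateRow (.inr b)
        (Sum.elim (0 : m → R) (B b) + Sum.elim (-Pi.single a 1) 0) := by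
      ext (i | i) (j | j) <;> simp [M₂, M, updateRow_apply, single_apply, Pi.single_apply] <;> grind
    rw [← hM₂₁, ← hM₂₂, ← det_updateRow_add, ← hM₂]
  rw [expand_row_a, expand_row_b, det_permute, det_fromBlocks_zero₁₂, det_fromBlocks_zero₂₁,
    det_fromBlocks_zero₂₁, det_eq_zero_of_row_eq_zero (A := A.updateRow a 0) a (by simp),
    det_updateRow_smul, Equiv.Perm.sign_swap Sum.inl_ne_inr, adjugate_apply, adjugate_apply]
  push_cast
  ring

theorem exists_det_eq_one_mulVec_one_eq_single (a : m) :
    ∃ P : Matrix m m R, det P = 1 ∧ P *ᵥ 1 = Pi.single a 1 := by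
  refine ⟨1 + vecMulVec (Pi.single a 1 - 1) (Pi.single a 1), ?_, ?_⟩
  · rw [vecMulVec_eq Unit, det_one_add_replicateCol_mul_replicateRow]
    simp
  · rw [add_mulVec, one_mulVec, vecMulVec_mulVec]
    simp

theorem adjugate_mul_mul_transpose_apply_self {P : Matrix m m R} (A : Matrix m m R) {u : m → R}
    {a : m} (hP : det P = 1) (hPu : P *ᵥ u = Pi.single a 1) :
    adjugate (P * A * Pᵀ) a a = u ⬝ᵥ adjugate A *ᵥ u := by
  have hu : adjugate P *ᵥ Pi.single a 1 = u := by
    rw [← hPu, mulVec_mulVec, adjugate_mul, hP, one_smul, one_mulVec]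
  rw [adjugate_mul_distrib, adjugate_mul_distrib, ← adjugate_transpose, ← Matrix.mul_assoc]
  calc ((adjugate P)ᵀ * adjugate A * adjugate P) a a
      = (((adjugate P)ᵀ * adjugate A * adjugate P) *ᵥ Pi.single a 1) a := by
        rw [mulVec_single_one]; rfl
    _ = ((adjugate A *ᵥ u) ᵥ* adjugate P) a := by
        rw [← mulVec_mulVec, ← mulVec_mulVec, hu, mulVec_transpose]
    _ = (adjugate A *ᵥ u) ⬝ᵥ (adjugate P *ᵥ Pi.single a 1) := by
        rw [mulVec_single_one]; rfl
    _ = u ⬝ᵥ adjugate A *ᵥ u := by rw [hu, dotProduct_comm]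

theorem det_fromBlocks_ones (A : Matrix m m R) (B : Matrix n n R) :
    det (fromBlocks A (vecMulVec 1 1) (-vecMulVec 1 1) B) =
      det A * det B + (1 ⬝ᵥ adjugate A *ᵥ 1) * (1 ⬝ᵥ adjugate B *ᵥ 1) := by
  rcases isEmpty_or_nonempty m with hm | ⟨⟨a⟩⟩
  · rw [Subsingleton.elim (-vecMulVec 1 1 : Matrix n m R) 0, det_fromBlocks_zero₂₁, det_isEmpty]
    simp
  rcases isEmpty_or_nonempty n with hn | ⟨⟨b⟩⟩
  · rw [Subsingleton.elim (vecMulVec 1 1 : Matrix m n R) 0, det_fromBlocks_zero₁₂,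
      det_isEmpty (A := B)]
    simp
  obtain ⟨P, hP, hP1⟩ := exists_det_eq_one_mulVec_one_eq_single (R := R) a
  obtain ⟨Q, hQ, hQ1⟩ := exists_det_eq_one_mulVec_one_eq_single (R := R) b
  set D := fromBlocks P 0 0 Q
  have hD : det D = 1 := by rw [det_fromBlocks_zero₂₁, hP, hQ, one_mul]
  have hconj : D * fromBlocks A (vecMulVec 1 1) (-vecMulVec 1 1) B * Dᵀ =
      fromBlocks (P * A * Pᵀ) (single a b 1) (-single b a 1) (Q * B * Qᵀ) := by
    simp only [D, fromBlocks_transpose, fromBlocks_multiply, transpose_zero, Matrix.zero_mul,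
      Matrix.mul_zero, add_zero, zero_add, Matrix.mul_neg, Matrix.neg_mul, mul_vecMulVec,
      vecMulVec_mul, vecMul_transpose, hP1, hQ1, single_eq_single_vecMulVec_single, zero_mulVec,
      zero_vecMulVec, neg_zero]
  calc det (fromBlocks A (vecMulVec 1 1) (-vecMulVec 1 1) B)
      = det (D * fromBlocks A (vecMulVec 1 1) (-vecMulVec 1 1) B * Dᵀ) := by
        rw [det_mul, det_mul, det_transpose, hD, one_mul, mul_one]
    _ = det A * det B + (1 ⬝ᵥ adjugate A *ᵥ 1) * (1 ⬝ᵥ adjugate B *ᵥ 1) := by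
        rw [hconj, det_fromBlocks_single_neg_single,
          adjugate_mul_mul_transpose_apply_self A hP hP1,
          adjugate_mul_mul_transpose_apply_self B hQ hQ1, det_mul, det_mul, det_mul, det_mul,
          det_transpose, det_transpose, hP, hQ]
        ring

theorem det_eq_zero_of_transpose_eq_neg_s3 [IsAddTorsionFree R] {A : Matrix n n R}
    (hA : Aᵀ = -A) (hn : Odd (Fintype.card n)) : det A = 0 := by
  have h := congrArg det hA
  rwa [det_transpose, det_neg, hn.neg_one_pow, neg_one_mul, self_eq_neg] at h

end Matrix

section Tournament

variable {V W : Type*}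

theorem skew_transpose {r : V → V → Prop} (hr : ∀ i j, r i j → ¬ r j i) :
    (skew r)ᵀ = -skew r := by
  ext i j
  by_cases hij : r i j
  · simp [skew, hij, hr i j hij]
  · by_cases hji : r j i <;> simp [skew, hij, hji]

theorem skew_joinRel (r : V → V → Prop) (s : W → W → Prop) :
    skew (joinRel r s) = fromBlocks (skew r) (vecMulVec 1 1) (-vecMulVec 1 1) (skew s) := by
  ext (i | i) (j | j) <;> simp [skew, joinRel] <;> rfl

theorem skew_plusRel_submatrix (r : V → V → Prop) :
    (skew (plusRel r)).submatrix (Equiv.optionEquivSumPUnit.{0} V).symm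
        (Equiv.optionEquivSumPUnit.{0} V).symm =
      fromBlocks (skew r) (vecMulVec 1 1) (-vecMulVec 1 1) 0 := by
  ext (i | i) (j | j) <;> simp [skew, plusRel]
  rfl

variable [Fintype V] [DecidableEq V] [Fintype W] [DecidableEq W]

theorem tdet_plusRel (r : V → V → Prop) : tdet (plusRel r) = 1 ⬝ᵥ adjugate (skew r) *ᵥ 1 := by
  rw [tdet, ← det_submatrix_equiv_self (Equiv.optionEquivSumPUnit.{0} V).symm,
    skew_plusRel_submatrix, det_fromBlocks_ones, adjugate_subsingleton (0 : Matrix PUnit PUnit ℤ)]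
  simp

theorem tdet_joinRel (r : V → V → Prop) (s : W → W → Prop) :
    tdet (joinRel r s) = tdet r * tdet s + tdet (plusRel r) * tdet (plusRel s) := by
  rw [tdet, skew_joinRel, det_fromBlocks_ones, tdet_plusRel, tdet_plusRel, tdet, tdet]

theorem IsTournament.tdet_eq_zero {r : V → V → Prop} (hr : IsTournament r)
    (hV : Odd (Fintype.card V)) : tdet r = 0 := by
  have hasymm : ∀ i j, r i j → ¬ r j i := fun i j hij hji => by
    rcases eq_or_ne i j with rfl | hne
    · exact hr.1 i hij
    · exact (hr.2 i j hne).1 hij hji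
  exact det_eq_zero_of_transpose_eq_neg_s3 (skew_transpose hasymm) hV

end Tournament

theorem stmt3_general {p q : ℕ} (hp : Odd p)
    (r : Fin p → Fin p → Prop) (s : Fin q → Fin q → Prop)
    (hr : IsTournament r) :
    tdet (joinRel r s) = tdet (plusRel r) * tdet (plusRel s) := by
  rw [tdet_joinRel, hr.tdet_eq_zero (by simpa using hp), zero_mul, zero_add]

theorem stmt3 {p q : ℕ} (hp : Odd p) (hq : Odd q)
    (r : Fin p → Fin p → Prop) (s : Fin q → Fin q → Prop)
    (hr : IsTournament r) (hs : IsTournament s) :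
    tdet (joinRel r s) = tdet (plusRel r) * tdet (plusRel s) :=
  stmt3_general hp r s hr
end

section
/- If two tournaments T1 and T2 on the same vertex set are switching equivalent, then T1 and T2 contain the same number of diamonds; in particular, a 4-subset X induces a diamond in T1 if and only if it induces a diamond in T2. -/
open scoped Classical

section Stmt5Aux

private def pOf5 (dom : Bool) (i j : Fin 4) : Bool :=
  if i = j then false
  else if i = 0 then dom
  else if j = 0 then !dom
  else decide ((i = 1 ∧ j = 2) ∨ (i = 2 ∧ j = 3) ∨ (i = 3 ∧ j = 1))

private def qOf5 (dom : Bool) (w : Fin 4 → Bool) (i j : Fin 4) : Prop :=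
  (if w i = w j then pOf5 dom i j else pOf5 dom j i) = true

private instance (dom w i j) : Decidable (qOf5 dom w i j) := by unfold qOf5; infer_instance

private lemma key5 : ∀ (dom : Bool) (w : Fin 4 → Bool), ∃ a b c d : Fin 4,
    a ≠ b ∧ a ≠ c ∧ a ≠ d ∧ b ≠ c ∧ b ≠ d ∧ c ≠ d ∧
    qOf5 dom w b c ∧ qOf5 dom w c d ∧ qOf5 dom w d b ∧
    ((qOf5 dom w a b ∧ qOf5 dom w a c ∧ qOf5 dom w a d) ∨
     (qOf5 dom w b a ∧ qOf5 dom w c a ∧ qOf5 dom w d a)) := by decide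

private lemma quad_set5 {V : Type*} (f : Fin 4 → V) (hinj : Function.Injective f)
    (a b c d : Fin 4) (hab : a ≠ b) (hac : a ≠ c) (had : a ≠ d)
    (hbc : b ≠ c) (hbd : b ≠ d) (hcd : c ≠ d) :
    ({f a, f b, f c, f d} : Finset V) = {f 0, f 1, f 2, f 3} := by
  have h4 : ({a, b, c, d} : Finset (Fin 4)) = Finset.univ := by
    apply Finset.eq_univ_of_card
    rw [Fintype.card_fin]
    simp [Finset.card_insert_of_notMem, Finset.mem_insert, hab, hac, had, hbc, hbd, hcd]
  have huniv : (Finset.univ : Finset (Fin 4)) = {0, 1, 2, 3} := by decide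
  calc ({f a, f b, f c, f d} : Finset V) = Finset.image f {a, b, c, d} := by
        simp [Finset.image_insert]
    _ = Finset.image f {0, 1, 2, 3} := by rw [h4, huniv]
    _ = {f 0, f 1, f 2, f 3} := by simp [Finset.image_insert]

private lemma build5 {V : Type*} (r : V → V → Prop) (W : Set V)
    (f : Fin 4 → V) (hinj : Function.Injective f) (dom : Bool)
    (hpr : ∀ i j : Fin 4, pOf5 dom i j = true → r (f i) (f j)) :
    IsDiamond (switchRel r W) {f 0, f 1, f 2, f 3} := by
  set w : Fin 4 → Bool := fun i => decide (f i ∈ W) with hw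
  have hq : ∀ i j : Fin 4, qOf5 dom w i j → switchRel r W (f i) (f j) := by
    intro i j hqij
    unfold qOf5 at hqij
    by_cases hwe : w i = w j
    · rw [if_pos hwe] at hqij
      have hiff : f i ∈ W ↔ f j ∈ W := by simpa [hw, decide_eq_decide] using hwe
      unfold switchRel; rw [if_pos hiff]; exact hpr _ _ hqij
    · rw [if_neg hwe] at hqij
      have hiff : ¬ (f i ∈ W ↔ f j ∈ W) := fun h => hwe (by simp [hw, decide_eq_decide, h])
      unfold switchRel; rw [if_neg hiff]; exact hpr _ _ hqij
  obtain ⟨a', b', c', d', h1, h2, h3, h4, h5, h6, hbc, hcd, hdb, hd⟩ := key5 dom w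
  refine ⟨f a', f b', f c', f d',
    (quad_set5 f hinj a' b' c' d' h1 h2 h3 h4 h5 h6).symm,
    fun h => h1 (hinj h), fun h => h2 (hinj h), fun h => h3 (hinj h),
    fun h => h4 (hinj h), fun h => h5 (hinj h), fun h => h6 (hinj h),
    hq _ _ hbc, hq _ _ hcd, hq _ _ hdb, ?_⟩
  rcases hd with ⟨x, y, z⟩ | ⟨x, y, z⟩
  · exact Or.inl ⟨hq _ _ x, hq _ _ y, hq _ _ z⟩
  · exact Or.inr ⟨hq _ _ x, hq _ _ y, hq _ _ z⟩

private lemma diamond_switch5 {V : Type*} (r : V → V → Prop) (W : Set V)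
    (X : Finset V) (h : IsDiamond r X) : IsDiamond (switchRel r W) X := by
  obtain ⟨a, b, c, d, hX, hab, hac, had, hbc, hbd, hcd, hbc', hcd', hdb', hdom⟩ := h
  have hinj : Function.Injective (![a, b, c, d] : Fin 4 → V) := by
    intro i j hij
    fin_cases i <;> fin_cases j <;> simp_all
  have hXeq : X = {(![a,b,c,d] : Fin 4 → V) 0, ![a,b,c,d] 1, ![a,b,c,d] 2, ![a,b,c,d] 3} := by
    simpa using hX
  rw [hXeq]
  rcases hdom with ⟨h1, h2, h3⟩ | ⟨h1, h2, h3⟩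
  · apply build5 r W _ hinj true
    intro i j hp
    fin_cases i <;> fin_cases j <;> simp_all [pOf5]
  · apply build5 r W _ hinj false
    intro i j hp
    fin_cases i <;> fin_cases j <;> simp_all [pOf5]

private lemma diamond_congr5 {V : Type*} {r s : V → V → Prop}
    (h : ∀ i j, r i j ↔ s i j) {X : Finset V} (hd : IsDiamond r X) : IsDiamond s X := by
  obtain ⟨a, b, c, d, hX, d1, d2, d3, d4, d5, d6, x, y, z, hdom⟩ := hd
  refine ⟨a, b, c, d, hX, d1, d2, d3, d4, d5, d6,
    (h _ _).mp x, (h _ _).mp y, (h _ _).mp z, ?_⟩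
  rcases hdom with ⟨p, q, t⟩ | ⟨p, q, t⟩
  · exact Or.inl ⟨(h _ _).mp p, (h _ _).mp q, (h _ _).mp t⟩
  · exact Or.inr ⟨(h _ _).mp p, (h _ _).mp q, (h _ _).mp t⟩

private lemma switch_involutive5 {V : Type*} (r : V → V → Prop) (W : Set V) :
    ∀ i j, switchRel (switchRel r W) W i j ↔ r i j := by
  intro i j
  by_cases h : i ∈ W ↔ j ∈ W
  · simp [switchRel, h]
  · have h' : ¬ (j ∈ W ↔ i ∈ W) := fun hh => h hh.symm
    simp [switchRel, h, h']

end Stmt5Aux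

theorem stmt5 {V : Type*} [Fintype V] [DecidableEq V] (r₁ r₂ : V → V → Prop)
    (h₁ : IsTournament r₁) (h₂ : IsTournament r₂) (hsw : SwitchEquiv r₁ r₂) :
    numDiamonds r₁ = numDiamonds r₂ ∧
      ∀ X : Finset V, IsDiamond r₁ X ↔ IsDiamond r₂ X := by
  obtain ⟨W, hW⟩ := hsw
  have hiff : ∀ X : Finset V, IsDiamond r₁ X ↔ IsDiamond r₂ X := by
    intro X
    constructor
    · intro h
      exact diamond_congr5 (fun i j => (hW i j).symm) (diamond_switch5 r₁ W X h)
    · intro h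
      have h1 : IsDiamond (switchRel r₁ W) X := diamond_congr5 hW h
      have h2 := diamond_switch5 (switchRel r₁ W) W X h1
      exact diamond_congr5 (switch_involutive5 r₁ W) h2
  refine ⟨?_, hiff⟩
  unfold numDiamonds
  congr 1
  exact Set.ext fun X => hiff X
end

section
/- Every tournament on 5 vertices contains exactly 0 or exactly 2 diamonds (i.e., δ_T ∈ {0, 2}). -/
open scoped Classical

-- ## auxiliary
def diaP {V : Type*} (r : V → V → Prop) (a p q s : V) : Prop :=
  ((r p q ∧ r q s ∧ r s p) ∨ (r q p ∧ r s q ∧ r p s)) ∧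
  ((r a p ∧ r a q ∧ r a s) ∨ (r p a ∧ r q a ∧ r s a))

lemma diaP_diamond {V : Type*} {r : V → V → Prop} {a p q s : V}
    (hap : a ≠ p) (haq : a ≠ q) (has : a ≠ s) (hpq : p ≠ q) (hps : p ≠ s) (hqs : q ≠ s)
    (h : diaP r a p q s) : IsDiamond r ({a, p, q, s} : Finset V) := by
  obtain ⟨(⟨h1, h2, h3⟩ | ⟨h1, h2, h3⟩), hdom⟩ := h
  · exact ⟨a, p, q, s, rfl, hap, haq, has, hpq, hps, hqs, h1, h2, h3, hdom⟩
  · refine ⟨a, q, p, s, by ext e; simp; tauto, haq, hap, has, hpq.symm, hqs, hps,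
      h1, h3, h2, ?_⟩
    tauto

lemma mem3 {V : Type*} {e p q s : V} (h : e ∈ ({p, q, s} : Finset V)) :
    e = p ∨ e = q ∨ e = s := by simpa using h

set_option maxHeartbeats 2000000 in
lemma diamond_iff {V : Type*} (r : V → V → Prop) (w x y z : V)
    (hwx : w ≠ x) (hwy : w ≠ y) (hwz : w ≠ z) (hxy : x ≠ y) (hxz : x ≠ z) (hyz : y ≠ z) :
    IsDiamond r ({w, x, y, z} : Finset V) ↔
      diaP r w x y z ∨ diaP r x w y z ∨ diaP r y w x z ∨ diaP r z w x y := by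
  constructor
  · rintro ⟨a, b, c, d, hX, hab, hac, had, hbc, hbd, hcd, h1, h2, h3, hdom⟩
    have ha : a ∈ ({w, x, y, z} : Finset V) := by rw [hX]; simp
    have key : ∀ p q s : V, ({w, x, y, z} : Finset V).erase a = {p, q, s} →
        diaP r a p q s := by
      rintro p q s he
      have hbcd : ({b, c, d} : Finset V) = {p, q, s} := by
        have h2' : ({a, b, c, d} : Finset V).erase a = {b, c, d} :=
          Finset.erase_insert (by simp [hab, hac, had])
        rw [← h2', ← hX, he]
      have hb : b = p ∨ b = q ∨ b = s := mem3 (hbcd ▸ (by simp : b ∈ ({b,c,d} : Finset V)))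
      have hc : c = p ∨ c = q ∨ c = s := mem3 (hbcd ▸ (by simp : c ∈ ({b,c,d} : Finset V)))
      have hd : d = p ∨ d = q ∨ d = s := mem3 (hbcd ▸ (by simp : d ∈ ({b,c,d} : Finset V)))
      unfold diaP
      rcases hb with rfl | rfl | rfl <;> rcases hc with rfl | rfl | rfl <;>
        rcases hd with rfl | rfl | rfl <;> first | tauto | simp_all
    rcases (by simpa using ha : a = w ∨ a = x ∨ a = y ∨ a = z) with rfl | rfl | rfl | rfl
    · refine Or.inl (key x y z ?_)
      rw [Finset.erase_insert (by simp [hwx, hwy, hwz])]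
    · refine Or.inr (Or.inl (key w y z ?_))
      ext e
      simp only [Finset.mem_erase, Finset.mem_insert, Finset.mem_singleton]
      constructor
      · rintro ⟨hne, rfl | rfl | rfl | rfl⟩ <;> tauto
      · rintro (rfl | rfl | rfl) <;> exact ⟨by rintro rfl; simp_all, by tauto⟩
    · refine Or.inr (Or.inr (Or.inl (key w x z ?_)))
      ext e
      simp only [Finset.mem_erase, Finset.mem_insert, Finset.mem_singleton]
      constructor
      · rintro ⟨hne, rfl | rfl | rfl | rfl⟩ <;> tauto
      · rintro (rfl | rfl | rfl) <;> exact ⟨by rintro rfl; simp_all, by tauto⟩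
    · refine Or.inr (Or.inr (Or.inr (key w x y ?_)))
      ext e
      simp only [Finset.mem_erase, Finset.mem_insert, Finset.mem_singleton]
      constructor
      · rintro ⟨hne, rfl | rfl | rfl | rfl⟩ <;> tauto
      · rintro (rfl | rfl | rfl) <;> exact ⟨by rintro rfl; simp_all, by tauto⟩
  · rintro (h | h | h | h)
    · exact diaP_diamond hwx hwy hwz hxy hxz hyz h
    · have := diaP_diamond hwx.symm hxy hxz hwy hwz hyz h
      rwa [show ({x, w, y, z} : Finset V) = {w, x, y, z} by ext e; simp; tauto] at this
    · have := diaP_diamond hwy.symm hxy.symm hyz hwx hwz hxz h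
      rwa [show ({y, w, x, z} : Finset V) = {w, x, y, z} by ext e; simp; tauto] at this
    · have := diaP_diamond hwz.symm hxz.symm hyz.symm hwx hwy hxy h
      rwa [show ({z, w, x, y} : Finset V) = {w, x, y, z} by ext e; simp; tauto] at this

noncomputable def q4 {V : Type*} (w x y z : V) : Finset V := {w, x, y, z}

lemma diamond_iff_q4 {V : Type*} (r : V → V → Prop) (w x y z : V)
    (hwx : w ≠ x) (hwy : w ≠ y) (hwz : w ≠ z) (hxy : x ≠ y) (hxz : x ≠ z) (hyz : y ≠ z) :
    IsDiamond r (q4 w x y z) ↔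
      diaP r w x y z ∨ diaP r x w y z ∨ diaP r y w x z ∨ diaP r z w x y :=
  diamond_iff r w x y z hwx hwy hwz hxy hxz hyz

def diaB (b : Fin 5 → Fin 5 → Bool) (a p q s : Fin 5) : Bool :=
  ((b p q && b q s && b s p) || (b q p && b s q && b p s)) &&
  ((b a p && b a q && b a s) || (b p a && b q a && b s a))

def dia4 (b : Fin 5 → Fin 5 → Bool) (w x y z : Fin 5) : Bool :=
  diaB b w x y z || diaB b x w y z || diaB b y w x z || diaB b z w x y

def countB (b : Fin 5 → Fin 5 → Bool) : ℕ :=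
  (dia4 b 1 2 3 4).toNat + (dia4 b 0 2 3 4).toNat + (dia4 b 0 1 3 4).toNat +
  (dia4 b 0 1 2 4).toNat + (dia4 b 0 1 2 3).toNat

lemma dia4_iff (b : Fin 5 → Fin 5 → Bool) (w x y z : Fin 5) :
    (diaP (fun i j => b i j = true) w x y z ∨ diaP (fun i j => b i j = true) x w y z ∨
     diaP (fun i j => b i j = true) y w x z ∨ diaP (fun i j => b i j = true) z w x y) ↔
    dia4 b w x y z = true := by
  simp only [diaP, dia4, diaB, Bool.and_eq_true, Bool.or_eq_true, and_assoc, or_assoc]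

lemma ite_toNat (p : Prop) [Decidable p] (bb : Bool) (h : p ↔ bb = true) :
    (if p then 1 else 0) = bb.toNat := by
  cases bb <;> simp_all

lemma card4_of_diamond {V : Type*} {r : V → V → Prop} {X : Finset V}
    (h : IsDiamond r X) : X.card = 4 := by
  obtain ⟨a, b, c, d, rfl, hab, hac, had, hbc, hbd, hcd, -⟩ := h
  rw [Finset.card_insert_of_notMem (by simp [hab, hac, had]),
    Finset.card_insert_of_notMem (by simp [hbc, hbd]),
    Finset.card_insert_of_notMem (by simp [hcd]), Finset.card_singleton]

lemma eq_erase_of_card4 {X : Finset (Fin 5)} (h : X.card = 4) :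
    ∃ i, X = Finset.univ.erase i := by
  have hc : Xᶜ.card = 1 := by rw [Finset.card_compl, h]; rfl
  obtain ⟨i, hi⟩ := Finset.card_eq_one.mp hc
  refine ⟨i, ?_⟩
  ext t
  simp only [Finset.mem_erase, Finset.mem_univ, and_true]
  constructor
  · intro ht
    rintro rfl
    have : t ∈ Xᶜ := by rw [hi]; simp
    exact (Finset.mem_compl.mp this) ht
  · intro ht
    by_contra hnot
    have : t ∈ Xᶜ := Finset.mem_compl.mpr hnot
    rw [hi] at this
    simp at this
    exact ht this

lemma erase_inj : Function.Injective (fun i : Fin 5 => Finset.univ.erase i) := by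
  decide

lemma nd_eq (b : Fin 5 → Fin 5 → Bool) :
    numDiamonds (fun i j => b i j = true) = countB b := by
  set R : Fin 5 → Fin 5 → Prop := fun i j => b i j = true with hR
  have key : {X : Finset (Fin 5) | IsDiamond R X} =
      (fun i : Fin 5 => Finset.univ.erase i) '' {i | IsDiamond R (Finset.univ.erase i)} := by
    ext X
    simp only [Set.mem_setOf_eq, Set.mem_image]
    constructor
    · intro h
      obtain ⟨i, rfl⟩ := eq_erase_of_card4 (card4_of_diamond h)
      exact ⟨i, h, rfl⟩
    · rintro ⟨i, hi, rfl⟩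
      exact hi
  rw [numDiamonds, key, Set.ncard_image_of_injective _ erase_inj]
  have key2 : {i : Fin 5 | IsDiamond R (Finset.univ.erase i)} =
      ↑(Finset.univ.filter fun i : Fin 5 => IsDiamond R (Finset.univ.erase i)) := by
    ext i; simp
  rw [key2, Set.ncard_coe_finset, Finset.card_filter, Fin.sum_univ_five]
  have memq4 : ∀ t w x y z : Fin 5, t ∈ q4 w x y z ↔ (t = w ∨ t = x ∨ t = y ∨ t = z) := by
    intro t w x y z
    simp [q4]
  have eq_erase : ∀ (i w x y z : Fin 5), (∀ t : Fin 5, t ≠ i ↔ (t = w ∨ t = x ∨ t = y ∨ t = z)) →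
      Finset.univ.erase i = q4 w x y z := by
    intro i w x y z h
    ext t
    rw [memq4, Finset.mem_erase]
    simp [h t]
  have e0 : (Finset.univ.erase (0 : Fin 5)) = q4 1 2 3 4 := eq_erase _ _ _ _ _ (by decide)
  have e1 : (Finset.univ.erase (1 : Fin 5)) = q4 0 2 3 4 := eq_erase _ _ _ _ _ (by decide)
  have e2 : (Finset.univ.erase (2 : Fin 5)) = q4 0 1 3 4 := eq_erase _ _ _ _ _ (by decide)
  have e3 : (Finset.univ.erase (3 : Fin 5)) = q4 0 1 2 4 := eq_erase _ _ _ _ _ (by decide)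
  have e4 : (Finset.univ.erase (4 : Fin 5)) = q4 0 1 2 3 := eq_erase _ _ _ _ _ (by decide)
  simp only [e0, e1, e2, e3, e4]
  have h0 : IsDiamond R (q4 1 2 3 4) ↔ dia4 b 1 2 3 4 = true :=
    (diamond_iff_q4 R 1 2 3 4 (by decide) (by decide) (by decide) (by decide) (by decide)
      (by decide)).trans (dia4_iff b 1 2 3 4)
  have h1 : IsDiamond R (q4 0 2 3 4) ↔ dia4 b 0 2 3 4 = true :=
    (diamond_iff_q4 R 0 2 3 4 (by decide) (by decide) (by decide) (by decide) (by decide)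
      (by decide)).trans (dia4_iff b 0 2 3 4)
  have h2 : IsDiamond R (q4 0 1 3 4) ↔ dia4 b 0 1 3 4 = true :=
    (diamond_iff_q4 R 0 1 3 4 (by decide) (by decide) (by decide) (by decide) (by decide)
      (by decide)).trans (dia4_iff b 0 1 3 4)
  have h3 : IsDiamond R (q4 0 1 2 4) ↔ dia4 b 0 1 2 4 = true :=
    (diamond_iff_q4 R 0 1 2 4 (by decide) (by decide) (by decide) (by decide) (by decide)
      (by decide)).trans (dia4_iff b 0 1 2 4)
  have h4 : IsDiamond R (q4 0 1 2 3) ↔ dia4 b 0 1 2 3 = true :=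
    (diamond_iff_q4 R 0 1 2 3 (by decide) (by decide) (by decide) (by decide) (by decide)
      (by decide)).trans (dia4_iff b 0 1 2 3)
  have tn : ∀ x : Bool, (if x = true then 1 else 0 : ℕ) = x.toNat := by
    intro x; cases x <;> rfl
  simp only [h0, h1, h2, h3, h4, tn]
  rfl

def mk5 (b01 b02 b03 b04 b12 b13 b14 b23 b24 b34 : Bool) : Fin 5 → Fin 5 → Bool :=
  fun i j =>
    match i.val, j.val with
    | 0, 1 => b01
    | 0, 2 => b02
    | 0, 3 => b03
    | 0, 4 => b04
    | 1, 2 => b12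
    | 1, 3 => b13
    | 1, 4 => b14
    | 2, 3 => b23
    | 2, 4 => b24
    | 3, 4 => b34
    | _, _ => false

def fullOf (v : Fin 5 → Fin 5 → Bool) : Fin 5 → Fin 5 → Bool :=
  fun i j => if i < j then v i j else if j < i then !(v j i) else false

lemma mk_eq (v : Fin 5 → Fin 5 → Bool) (i j : Fin 5) (h : i < j) :
    mk5 (v 0 1) (v 0 2) (v 0 3) (v 0 4) (v 1 2) (v 1 3) (v 1 4) (v 2 3) (v 2 4) (v 3 4) i j
      = v i j := by
  fin_cases i <;> fin_cases j <;> first | rfl | exact absurd h (by decide)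

set_option maxHeartbeats 4000000 in
set_option maxRecDepth 10000 in
lemma core : ∀ b01 b02 b03 b04 b12 b13 b14 b23 b24 b34 : Bool,
    countB (fullOf (mk5 b01 b02 b03 b04 b12 b13 b14 b23 b24 b34)) = 0 ∨
    countB (fullOf (mk5 b01 b02 b03 b04 b12 b13 b14 b23 b24 b34)) = 2 := by
  decide

lemma nd_equiv {V W : Type*} [Fintype V] [Fintype W] (e : V ≃ W) (r : V → V → Prop) :
    numDiamonds (fun i j => r (e.symm i) (e.symm j)) = numDiamonds r := by
  unfold numDiamonds
  have key : {X : Finset W | IsDiamond (fun i j => r (e.symm i) (e.symm j)) X} =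
      (fun X : Finset V => X.image e) '' {X : Finset V | IsDiamond r X} := by
    ext X
    simp only [Set.mem_setOf_eq, Set.mem_image]
    constructor
    · rintro ⟨a, b, c, d, rfl, hab, hac, had, hbc, hbd, hcd, h1, h2, h3, hdom⟩
      refine ⟨{e.symm a, e.symm b, e.symm c, e.symm d},
        ⟨e.symm a, e.symm b, e.symm c, e.symm d, rfl,
          e.symm.injective.ne hab, e.symm.injective.ne hac, e.symm.injective.ne had,
          e.symm.injective.ne hbc, e.symm.injective.ne hbd, e.symm.injective.ne hcd,
          h1, h2, h3, hdom⟩, ?_⟩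
      simp [Finset.image_insert]
    · rintro ⟨Y, ⟨a, b, c, d, rfl, hab, hac, had, hbc, hbd, hcd, h1, h2, h3, hdom⟩, rfl⟩
      refine ⟨e a, e b, e c, e d, by simp [Finset.image_insert], e.injective.ne hab,
        e.injective.ne hac, e.injective.ne had, e.injective.ne hbc, e.injective.ne hbd,
        e.injective.ne hcd, ?_, ?_, ?_, ?_⟩ <;> simp only [Equiv.symm_apply_apply] <;> tauto
  rw [key, Set.ncard_image_of_injective _ (Finset.image_injective e.injective)]

theorem stmt6 {V : Type*} [Fintype V] [DecidableEq V] (r : V → V → Prop)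
    (hT : IsTournament r) (hcard : Fintype.card V = 5) :
    numDiamonds r = 0 ∨ numDiamonds r = 2 := by
  have e : V ≃ Fin 5 := Fintype.equivFinOfCardEq hcard
  set r' : Fin 5 → Fin 5 → Prop := fun i j => r (e.symm i) (e.symm j) with hr'
  have hT' : IsTournament r' :=
    ⟨fun i => hT.1 _, fun i j hne => hT.2 _ _ (e.symm.injective.ne hne)⟩
  set v0 : Fin 5 → Fin 5 → Bool := fun i j => decide (r' i j) with hv0
  set M : Fin 5 → Fin 5 → Bool := mk5 (v0 0 1) (v0 0 2) (v0 0 3) (v0 0 4) (v0 1 2)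
    (v0 1 3) (v0 1 4) (v0 2 3) (v0 2 4) (v0 3 4) with hM
  have hv0' : ∀ i j, (v0 i j = true) ↔ r' i j := by
    intro i j; rw [hv0]; exact decide_eq_true_iff
  have hiff : ∀ i j, r' i j ↔ fullOf M i j = true := by
    intro i j
    rcases lt_trichotomy i j with h | rfl | h
    · simp only [fullOf, if_pos h, hM, mk_eq v0 i j h]
      exact (hv0' i j).symm
    · have : ¬ (i < i) := lt_irrefl i
      simp only [fullOf, if_neg this]
      exact iff_of_false (hT'.1 i) (by simp)
    · have hne : i ≠ j := ne_of_gt h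
      have hnlt : ¬ (i < j) := not_lt_of_gt h
      rw [hT'.2 i j hne]
      simp only [fullOf, if_neg hnlt, if_pos h, hM, mk_eq v0 j i h, Bool.not_eq_true']
      rw [← hv0' j i]
      simp
  have hrel : r' = fun i j => fullOf M i j = true :=
    funext fun i => funext fun j => propext (hiff i j)
  have h1 : numDiamonds r = numDiamonds r' := (nd_equiv e r).symm
  rw [h1, hrel, nd_eq (fullOf M), hM]
  exact core (v0 0 1) (v0 0 2) (v0 0 3) (v0 0 4) (v0 1 2) (v0 1 3) (v0 1 4) (v0 2 3)
    (v0 2 4) (v0 3 4)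
end

section
/- Every tournament T on 6 vertices is switching equivalent to a tournament containing a transitive subtournament on 4 vertices. -/
open scoped Classical

lemma tour_asymm {V : Type*} {r : V → V → Prop} (h : IsTournament r) {i j : V} :
    r i j → ¬ r j i := by
  intro hij hji
  by_cases e : i = j
  · exact h.1 i (e ▸ hij)
  · exact ((h.2 i j e).mp hij) hji

lemma tour_total {V : Type*} {r : V → V → Prop} (h : IsTournament r) {i j : V}
    (hne : i ≠ j) (hn : ¬ r j i) : r i j := (h.2 i j hne).mpr hn

lemma switch_tournament {V : Type*} {r : V → V → Prop} (h : IsTournament r) (W : Set V) :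
    IsTournament (switchRel r W) := by
  constructor
  · intro i
    simp only [switchRel, if_pos Iff.rfl]
    exact h.1 i
  · intro i j hne
    unfold switchRel
    by_cases hc : (i ∈ W ↔ j ∈ W)
    · rw [if_pos hc, if_pos hc.symm]
      exact h.2 i j hne
    · rw [if_neg hc, if_neg (fun h' => hc h'.symm)]
      exact h.2 j i (Ne.symm hne)

lemma transOn4 {V : Type*} [DecidableEq V] {s : V → V → Prop} (h : IsTournament s) {a b c d : V}
    (hab : s a b) (hac : s a c) (had : s a d) (hbc : s b c) (hbd : s b d) (hcd : s c d) :
    IsTransitiveOn s ({a, b, c, d} : Finset V) := by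
  have nba : ¬ s b a := tour_asymm h hab
  have nca : ¬ s c a := tour_asymm h hac
  have nda : ¬ s d a := tour_asymm h had
  have ncb : ¬ s c b := tour_asymm h hbc
  have ndb : ¬ s d b := tour_asymm h hbd
  have ndc : ¬ s d c := tour_asymm h hcd
  have naa : ¬ s a a := h.1 a
  have nbb : ¬ s b b := h.1 b
  have ncc : ¬ s c c := h.1 c
  have ndd : ¬ s d d := h.1 d
  intro p hp q hq t ht hpq hqt
  simp only [Finset.mem_insert, Finset.mem_singleton] at hp hq ht
  rcases hp with rfl | rfl | rfl | rfl <;> rcases hq with rfl | rfl | rfl | rfl <;>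
    rcases ht with rfl | rfl | rfl | rfl <;>
      first
        | assumption
        | exact absurd hpq ‹_›
        | exact absurd hqt ‹_›

lemma card4_of {V : Type*} [DecidableEq V] {a b c d : V} (hab : a ≠ b) (hac : a ≠ c)
    (had : a ≠ d) (hbc : b ≠ c) (hbd : b ≠ d) (hcd : c ≠ d) :
    ({a, b, c, d} : Finset V).card = 4 := by
  rw [Finset.card_insert_of_notMem (by simp [hab, hac, had]),
    Finset.card_insert_of_notMem (by simp [hbc, hbd]),
    Finset.card_insert_of_notMem (by simp [hcd]), Finset.card_singleton]

theorem stmt9 {V : Type*} [Fintype V] [DecidableEq V] (r : V → V → Prop)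
    (hT : IsTournament r) (hcard : Fintype.card V = 6) :
    ∃ (W : Set V) (X : Finset V), X.card = 4 ∧ IsTransitiveOn (switchRel r W) X := by
  obtain ⟨v⟩ : Nonempty V := Fintype.card_pos_iff.mp (by omega)
  set W : Set V := {u | r u v} with hW
  refine ⟨W, ?_⟩
  set s : V → V → Prop := switchRel r W with hs
  have hsT : IsTournament s := switch_tournament hT W
  have hvW : v ∉ W := fun h' => hT.1 v h'
  have hdom : ∀ u, u ≠ v → s v u := by
    intro u hu
    by_cases huW : u ∈ W
    · have hc : ¬ (v ∈ W ↔ u ∈ W) := fun h' => hvW (h'.mpr huW)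
      show switchRel r W v u
      unfold switchRel
      rw [if_neg hc]
      exact huW
    · have hvu : r v u := tour_total hT (Ne.symm hu) huW
      have hc : (v ∈ W ↔ u ∈ W) := iff_of_false hvW huW
      show switchRel r W v u
      unfold switchRel
      rw [if_pos hc]
      exact hvu
  -- pick a vertex a ≠ v
  have hA : (Finset.univ.erase v).card = 5 := by
    rw [Finset.card_erase_of_mem (Finset.mem_univ v), Finset.card_univ, hcard]
  obtain ⟨a, ha⟩ : (Finset.univ.erase v).Nonempty := Finset.card_pos.mp (by omega)
  have hav : a ≠ v := Finset.ne_of_mem_erase ha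
  set B : Finset V := (Finset.univ.erase v).erase a with hB
  have hBcard : B.card = 4 := by
    rw [hB, Finset.card_erase_of_mem ha, hA]
  set outs : Finset V := B.filter (fun u => s a u) with houts
  set ins : Finset V := B.filter (fun u => s u a) with hins
  have hcover : B ⊆ outs ∪ ins := by
    intro u hu
    have hua : u ≠ a := Finset.ne_of_mem_erase hu
    by_cases h' : s a u
    · exact Finset.mem_union_left _ (Finset.mem_filter.mpr ⟨hu, h'⟩)
    · exact Finset.mem_union_right _
        (Finset.mem_filter.mpr ⟨hu, tour_total hsT hua h'⟩)
  have hsum : 4 ≤ outs.card + ins.card := by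
    calc 4 = B.card := hBcard.symm
    _ ≤ (outs ∪ ins).card := Finset.card_le_card hcover
    _ ≤ outs.card + ins.card := Finset.card_union_le _ _
  have key : ∃ b c, b ∈ B ∧ c ∈ B ∧ b ≠ c ∧
      ((s a b ∧ s a c) ∨ (s b a ∧ s c a)) := by
    by_cases hcase : 2 ≤ outs.card
    · obtain ⟨b, hb, c, hc, hbc⟩ := Finset.one_lt_card.mp (show 1 < outs.card by omega)
      obtain ⟨hb1, hb2⟩ := Finset.mem_filter.mp hb
      obtain ⟨hc1, hc2⟩ := Finset.mem_filter.mp hc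
      exact ⟨b, c, hb1, hc1, hbc, Or.inl ⟨hb2, hc2⟩⟩
    · have : 2 ≤ ins.card := by omega
      obtain ⟨b, hb, c, hc, hbc⟩ := Finset.one_lt_card.mp (show 1 < ins.card by omega)
      obtain ⟨hb1, hb2⟩ := Finset.mem_filter.mp hb
      obtain ⟨hc1, hc2⟩ := Finset.mem_filter.mp hc
      exact ⟨b, c, hb1, hc1, hbc, Or.inr ⟨hb2, hc2⟩⟩
  obtain ⟨b, c, hbB, hcB, hbc, hcase⟩ := key
  have hbv : b ≠ v := Finset.ne_of_mem_erase (Finset.mem_of_mem_erase hbB)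
  have hcv : c ≠ v := Finset.ne_of_mem_erase (Finset.mem_of_mem_erase hcB)
  have hba : b ≠ a := Finset.ne_of_mem_erase hbB
  have hca : c ≠ a := Finset.ne_of_mem_erase hcB
  have hva : s v a := hdom a hav
  have hvb : s v b := hdom b hbv
  have hvc : s v c := hdom c hcv
  -- orient b, c
  rcases hcase with ⟨hab', hac'⟩ | ⟨hba', hca'⟩
  · by_cases hbc' : s b c
    · exact ⟨{v, a, b, c}, card4_of (Ne.symm hav) (Ne.symm hbv) (Ne.symm hcv) hba.symm
        hca.symm hbc, transOn4 hsT hva hvb hvc hab' hac' hbc'⟩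
    · have hcb' : s c b := tour_total hsT (Ne.symm hbc) hbc'
      refine ⟨{v, a, c, b}, card4_of (Ne.symm hav) (Ne.symm hcv) (Ne.symm hbv) hca.symm
        hba.symm hbc.symm, transOn4 hsT hva hvc hvb hac' hab' hcb'⟩
  · by_cases hbc' : s b c
    · exact ⟨{v, b, c, a}, card4_of (Ne.symm hbv) (Ne.symm hcv) (Ne.symm hav) hbc hba
        hca, transOn4 hsT hvb hvc hva hbc' hba' hca'⟩
    · have hcb' : s c b := tour_total hsT (Ne.symm hbc) hbc'
      exact ⟨{v, c, b, a}, card4_of (Ne.symm hcv) (Ne.symm hbv) (Ne.symm hav) hbc.symm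
        hca hba, transOn4 hsT hvc hvb hva hcb' hca' hba'⟩
end

section
/- Let R be a tournament with vertices v_1,...,v_n, let a_1,...,a_n be positive integers, and let R(a_1,...,a_n) be the transitive blowup of R in which each v_i is replaced by a transitive tournament on a_i vertices. If U = {v_i : a_i is odd} is nonempty, then det(R(a_1,...,a_n)) = det(R[U]); if all a_i are even, then det(R(a_1,...,a_n)) = 1. -/
open scoped Classical

open Matrix

/-- Column version of adding multiples of a column to other columns. -/
theorem aux13_my_det_eq_of_forall_col_eq_smul_add_const {n R : Type*} [DecidableEq n] [Fintype n]
    [CommRing R] {A B : Matrix n n R} (c : n → R) (k : n)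
    (hk : c k = 0) (A_eq : ∀ i j, A i j = B i j + c j * B i k) : det A = det B := by
  rw [← det_transpose A, ← det_transpose B]
  exact Matrix.det_eq_of_forall_row_eq_smul_add_const c k hk fun i j => A_eq j i


/-- Equivalence splitting off two distinguished elements. -/
def aux13_pairEquiv {n : Type*} [DecidableEq n] (i₀ i₁ : n) (hne : i₀ ≠ i₁) :
    (Fin 2 ⊕ {x : n // x ≠ i₀ ∧ x ≠ i₁}) ≃ n where
  toFun := Sum.elim (fun i => if i = 0 then i₀ else i₁) Subtype.val
  invFun x := if h0 : x = i₀ then .inl 0 else if h1 : x = i₁ then .inl 1 else .inr ⟨x, h0, h1⟩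
  left_inv := by
    rintro (⟨i, hi⟩ | ⟨x, hx0, hx1⟩)
    · interval_cases i
      · simp
      · simp [hne.symm, hne]
    · simp [hx0, hx1]
  right_inv := by
    intro x
    by_cases h0 : x = i₀
    · simp [h0]
    · by_cases h1 : x = i₁
      · simp [h0, h1, hne.symm]
      · simp [h0, h1]

theorem aux13_det_eq_block {n : Type*} [Fintype n] [DecidableEq n] (N : Matrix n n ℤ) (i₀ i₁ : n)
    (hne : i₀ ≠ i₁)
    (hr0 : ∀ j, N i₀ j = if j = i₁ then 1 else 0)
    (hc0 : ∀ k, N k i₀ = if k = i₁ then -1 else 0)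
    (hr1 : ∀ j, j ≠ i₀ → j ≠ i₁ → N i₁ j = 0)
    (hc1 : ∀ k, k ≠ i₀ → N k i₁ = 0) :
    N.det = (N.submatrix (fun x : {x : n // x ≠ i₀ ∧ x ≠ i₁} => x.1)
      (fun x : {x : n // x ≠ i₀ ∧ x ≠ i₁} => x.1)).det := by
  rw [← Matrix.det_submatrix_equiv_self (aux13_pairEquiv i₀ i₁ hne) N]
  have hblock : N.submatrix (aux13_pairEquiv i₀ i₁ hne) (aux13_pairEquiv i₀ i₁ hne) =
      Matrix.fromBlocks (!![0, 1; -1, 0]) 0 0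
        (N.submatrix (fun x : {x : n // x ≠ i₀ ∧ x ≠ i₁} => x.1)
          (fun x : {x : n // x ≠ i₀ ∧ x ≠ i₁} => x.1)) := by
    ext x y
    have aux13_key2 : ∀ i : Fin 2, (aux13_pairEquiv i₀ i₁ hne) (.inl i) = if i = 0 then i₀ else i₁ := by
      intro i; rfl
    rcases x with (i | ⟨x, hx0, hx1⟩) <;> rcases y with (j | ⟨y, hy0, hy1⟩)
    · fin_cases i <;> fin_cases j <;>
        simp [aux13_pairEquiv, hr0, hc0, hne, hne.symm, hc1 i₁ (Ne.symm hne)]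
    · fin_cases i
      · simp [aux13_pairEquiv, hr0, hy1]
      · simp [aux13_pairEquiv, hr1 y hy0 hy1]
    · fin_cases j
      · simp [aux13_pairEquiv, hc0, hx1]
      · simp [aux13_pairEquiv, hc1 x hx0]
    · simp [aux13_pairEquiv]
  rw [hblock, Matrix.det_fromBlocks_zero₂₁]
  have h2 : (!![(0:ℤ), 1; -1, 0]).det = 1 := by simp [Matrix.det_fin_two]
  rw [h2, one_mul]

theorem aux13_key {n : Type*} [Fintype n] [DecidableEq n] (M : Matrix n n ℤ) (i₀ i₁ : n)
    (hne : i₀ ≠ i₁) (h00 : M i₀ i₀ = 0) (h01 : M i₀ i₁ = 1) (h10 : M i₁ i₀ = -1)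
    (h11 : M i₁ i₁ = 0)
    (hrow : ∀ j, j ≠ i₀ → j ≠ i₁ → M i₀ j = M i₁ j)
    (hcol : ∀ k, k ≠ i₀ → k ≠ i₁ → M k i₀ = M k i₁) :
    M.det = (M.submatrix (fun x : {x : n // x ≠ i₀ ∧ x ≠ i₁} => x.1)
      (fun x : {x : n // x ≠ i₀ ∧ x ≠ i₁} => x.1)).det := by
  classical
  set M₁ : Matrix n n ℤ := M.updateRow i₀ (M i₀ + (-1 : ℤ) • M i₁) with hM₁
  have d1 : M₁.det = M.det := Matrix.det_updateRow_add_smul_self M hne (-1)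
  set M₂ : Matrix n n ℤ := M₁.updateCol i₀ (fun k => M₁ k i₀ + (-1 : ℤ) • M₁ k i₁) with hM₂
  have d2 : M₂.det = M₁.det := Matrix.det_updateCol_add_smul_self M₁ hne (-1)
  -- basic entry computations for M₂
  have e1row : ∀ j, M₁ i₀ j = M i₀ j - M i₁ j := by
    intro j; simp [hM₁, Matrix.updateRow_self, sub_eq_add_neg]
  have e1other : ∀ k j, k ≠ i₀ → M₁ k j = M k j := by
    intro k j hk; simp [hM₁, Matrix.updateRow_ne hk]
  have e2col : ∀ k, M₂ k i₀ = M₁ k i₀ - M₁ k i₁ := by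
    intro k; simp [hM₂, Matrix.updateCol_self, sub_eq_add_neg]
  have e2other : ∀ k j, j ≠ i₀ → M₂ k j = M₁ k j := by
    intro k j hj; simp [hM₂, Matrix.updateCol_ne hj]
  -- row i₀ of M₂ is the indicator of i₁ ; column i₀ of M₂ is -(indicator of i₁)
  have row0 : ∀ j, M₂ i₀ j = if j = i₁ then 1 else 0 := by
    intro j
    by_cases hj0 : j = i₀
    · subst hj0
      rw [e2col, e1row, e1row, if_neg hne, h00, h10, h01, h11]; ring
    · rw [e2other _ _ hj0, e1row]
      by_cases hj1 : j = i₁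
      · subst hj1; rw [if_pos rfl, h01, h11]; ring
      · rw [if_neg hj1, hrow j hj0 hj1]; ring
  have col0 : ∀ k, M₂ k i₀ = if k = i₁ then -1 else 0 := by
    intro k
    by_cases hk0 : k = i₀
    · subst hk0
      rw [e2col, e1row, e1row, if_neg hne, h00, h10, h01, h11]; ring
    · rw [e2col, e1other _ _ hk0, e1other _ _ hk0]
      by_cases hk1 : k = i₁
      · subst hk1; rw [if_pos rfl, h10, h11]; ring
      · rw [if_neg hk1, hcol k hk0 hk1]; ring
  -- step 3: clear column i₁ using row i₀
  set c : n → ℤ := fun k => if k = i₀ then 0 else -(M₂ k i₁) with hc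
  set M₃ : Matrix n n ℤ := Matrix.of fun k j => M₂ k j + c k * M₂ i₀ j with hM₃
  have d3 : M₃.det = M₂.det :=
    Matrix.det_eq_of_forall_row_eq_smul_add_const c i₀ (by simp [hc]) (fun i j => rfl)
  have e3 : ∀ k j, M₃ k j = M₂ k j + c k * M₂ i₀ j := fun k j => rfl
  have col1 : ∀ k, k ≠ i₀ → M₃ k i₁ = 0 := by
    intro k hk
    rw [e3, row0, if_pos rfl, hc]; simp [hk]
  have m3row0 : ∀ j, M₃ i₀ j = if j = i₁ then 1 else 0 := by
    intro j; rw [e3, hc]; simp [row0 j]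
  have m3col0 : ∀ k, M₃ k i₀ = if k = i₁ then -1 else 0 := by
    intro k; rw [e3, row0, if_neg hne, mul_zero, add_zero, col0]
  have m3other : ∀ k j, k ≠ i₀ → j ≠ i₀ → j ≠ i₁ → M₃ k j = M k j := by
    intro k j hk hj0 hj1
    rw [e3, row0, if_neg hj1, mul_zero, add_zero, e2other _ _ hj0, e1other _ _ hk]
  -- step 4: clear row i₁ using column i₀
  set d : n → ℤ := fun j => if j = i₀ then 0 else M₃ i₁ j with hd
  set M₄ : Matrix n n ℤ := Matrix.of fun k j => M₃ k j + d j * M₃ k i₀ with hM₄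
  have d4 : M₄.det = M₃.det :=
    aux13_my_det_eq_of_forall_col_eq_smul_add_const d i₀ (by simp [hd]) (fun i j => rfl)
  have e4 : ∀ k j, M₄ k j = M₃ k j + d j * M₃ k i₀ := fun k j => rfl
  -- final form of M₄
  have f_row0 : ∀ j, M₄ i₀ j = if j = i₁ then 1 else 0 := by
    intro j; rw [e4, m3col0, if_neg hne, mul_zero, add_zero, m3row0]
  have f_col0 : ∀ k, M₄ k i₀ = if k = i₁ then -1 else 0 := by
    intro k; rw [e4, hd]; simp [m3col0 k]
  have f_row1 : ∀ j, j ≠ i₀ → j ≠ i₁ → M₄ i₁ j = 0 := by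
    intro j hj0 hj1
    rw [e4, m3col0, if_pos rfl]; simp only [hd]; rw [if_neg hj0]; ring
  have f_col1 : ∀ k, k ≠ i₀ → M₄ k i₁ = 0 := by
    intro k hk
    by_cases hk1 : k = i₁
    · subst hk1
      rw [e4, m3col0, if_pos rfl]; simp only [hd]; rw [if_neg hk]; ring
    · rw [e4, col1 k hk, m3col0, if_neg hk1, mul_zero, add_zero]
  have f_other : ∀ k j, k ≠ i₀ → k ≠ i₁ → j ≠ i₀ → j ≠ i₁ → M₄ k j = M k j := by
    intro k j hk0 hk1 hj0 hj1
    rw [e4, m3col0, if_neg hk1, mul_zero, add_zero, m3other k j hk0 hj0 hj1]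
  have dfinal : M₄.det = (M₄.submatrix (fun x : {x : n // x ≠ i₀ ∧ x ≠ i₁} => x.1)
      (fun x : {x : n // x ≠ i₀ ∧ x ≠ i₁} => x.1)).det :=
    aux13_det_eq_block M₄ i₀ i₁ hne f_row0 f_col0 f_row1 f_col1
  have hsub : M₄.submatrix (fun x : {x : n // x ≠ i₀ ∧ x ≠ i₁} => x.1)
      (fun x : {x : n // x ≠ i₀ ∧ x ≠ i₁} => x.1) =
      M.submatrix (fun x : {x : n // x ≠ i₀ ∧ x ≠ i₁} => x.1)
      (fun x : {x : n // x ≠ i₀ ∧ x ≠ i₁} => x.1) := by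
    ext ⟨x, hx0, hx1⟩ ⟨y, hy0, hy1⟩
    exact f_other x y hx0 hx1 hy0 hy1
  rw [← d1, ← d2, ← d3, ← d4, dfinal, hsub]

-- entry lemmas for skew of blowup
lemma aux13_skew_blowup_same {V : Type*} [DecidableEq V] (r : V → V → Prop) (a : V → ℕ)
    (v : V) (p q : Fin (a v)) :
    skew (blowup r a) ⟨v, p⟩ ⟨v, q⟩ = if p.val < q.val then 1 else if q.val < p.val then -1 else 0 := by
  have h1 : blowup r a ⟨v, p⟩ ⟨v, q⟩ ↔ p < q := by
    simp [blowup, blowupG]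
  have h2 : blowup r a ⟨v, q⟩ ⟨v, p⟩ ↔ q < p := by
    simp [blowup, blowupG]
  simp only [skew, Matrix.of_apply]
  by_cases h : p.val < q.val
  · rw [if_pos (h1.mpr h), if_pos h]
  · rw [if_neg (fun hc => h (h1.mp hc)), if_neg h]
    by_cases h' : q.val < p.val
    · rw [if_pos (h2.mpr h'), if_pos h']
    · rw [if_neg (fun hc => h' (h2.mp hc)), if_neg h']

lemma aux13_skew_blowup_ne {V : Type*} [DecidableEq V] (r : V → V → Prop) (a : V → ℕ)
    (v w : V) (hvw : v ≠ w) (p : Fin (a v)) (q : Fin (a w)) :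
    skew (blowup r a) ⟨v, p⟩ ⟨w, q⟩ = if r v w then 1 else if r w v then -1 else 0 := by
  have h1 : blowup r a ⟨v, p⟩ ⟨w, q⟩ ↔ r v w := by
    simp [blowup, blowupG, hvw]
  have h2 : blowup r a ⟨w, q⟩ ⟨v, p⟩ ↔ r w v := by
    simp [blowup, blowupG, Ne.symm hvw]
  simp only [skew, Matrix.of_apply]
  by_cases h : r v w
  · rw [if_pos (h1.mpr h), if_pos h]
  · rw [if_neg (fun hc => h (h1.mp hc)), if_neg h]
    by_cases h' : r w v
    · rw [if_pos (h2.mpr h'), if_pos h']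
    · rw [if_neg (fun hc => h' (h2.mp hc)), if_neg h']

lemma aux13_sigma_eq_iff {V : Type*} (a : V → ℕ) (v : V) (p q : Fin (a v)) :
    (⟨v, p⟩ : Σ u, Fin (a u)) = ⟨v, q⟩ ↔ p.val = q.val := by
  constructor
  · intro h
    have := (Sigma.mk.inj_iff.mp h).2
    rw [heq_eq_eq] at this
    exact congrArg Fin.val this
  · intro h
    congr 1
    exact Fin.ext h

lemma aux13_reduce {V : Type*} [Fintype V] [DecidableEq V] (r : V → V → Prop)
    (a a' : V → ℕ) (i : V) (hi : a' i + 2 = a i) (hother : ∀ v, v ≠ i → a' v = a v) :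
    tdet (blowup r a) = tdet (blowup r a') := by
  have h0 : 0 < a i := by omega
  have h1 : 1 < a i := by omega
  set i₀ : Σ v, Fin (a v) := ⟨i, ⟨0, h0⟩⟩ with hi₀
  set i₁ : Σ v, Fin (a v) := ⟨i, ⟨1, h1⟩⟩ with hi₁
  set M : Matrix (Σ v, Fin (a v)) (Σ v, Fin (a v)) ℤ := skew (blowup r a) with hM
  have hne : i₀ ≠ i₁ := by
    intro h
    rw [hi₀, hi₁, aux13_sigma_eq_iff] at h
    simp at h
  -- helper: characterize ≠ i₀ / ≠ i₁ for elements of block i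
  have hne0 : ∀ q : Fin (a i), (⟨i, q⟩ : Σ v, Fin (a v)) ≠ i₀ ↔ q.val ≠ 0 := by
    intro q
    rw [hi₀]
    constructor
    · intro h hc; exact h ((aux13_sigma_eq_iff a i q _).mpr hc)
    · intro h hc; exact h ((aux13_sigma_eq_iff a i q _).mp hc)
  have hne1 : ∀ q : Fin (a i), (⟨i, q⟩ : Σ v, Fin (a v)) ≠ i₁ ↔ q.val ≠ 1 := by
    intro q
    rw [hi₁]
    constructor
    · intro h hc; exact h ((aux13_sigma_eq_iff a i q _).mpr hc)
    · intro h hc; exact h ((aux13_sigma_eq_iff a i q _).mp hc)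
  have hrow : ∀ j, j ≠ i₀ → j ≠ i₁ → M i₀ j = M i₁ j := by
    rintro ⟨w, q⟩ hj0 hj1
    by_cases hw : w = i
    · subst hw
      have hq0 : q.val ≠ 0 := (hne0 q).mp hj0
      have hq1 : q.val ≠ 1 := (hne1 q).mp hj1
      rw [hM, hi₀, hi₁, aux13_skew_blowup_same, aux13_skew_blowup_same]
      simp only [show (0 : ℕ) < q.val from by omega, show (1 : ℕ) < q.val from by omega,
        if_pos]
    · rw [hM, hi₀, hi₁, aux13_skew_blowup_ne r a i w (Ne.symm hw), aux13_skew_blowup_ne r a i w (Ne.symm hw)]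
  have hcol : ∀ k, k ≠ i₀ → k ≠ i₁ → M k i₀ = M k i₁ := by
    rintro ⟨w, q⟩ hj0 hj1
    by_cases hw : w = i
    · subst hw
      have hq0 : q.val ≠ 0 := (hne0 q).mp hj0
      have hq1 : q.val ≠ 1 := (hne1 q).mp hj1
      rw [hM, hi₀, hi₁, aux13_skew_blowup_same, aux13_skew_blowup_same]
      simp only [show ¬ (q.val < 0) from by omega, show ¬ (q.val < 1) from by omega,
        show (0 : ℕ) < q.val from by omega, show (1 : ℕ) < q.val from by omega, if_neg,
        not_false_iff, if_pos]
    · rw [hM, hi₀, hi₁, aux13_skew_blowup_ne r a w i hw, aux13_skew_blowup_ne r a w i hw]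
  have h00 : M i₀ i₀ = 0 := by rw [hM, hi₀, aux13_skew_blowup_same]; simp
  have h01 : M i₀ i₁ = 1 := by rw [hM, hi₀, hi₁, aux13_skew_blowup_same]; simp
  have h10 : M i₁ i₀ = -1 := by rw [hM, hi₀, hi₁, aux13_skew_blowup_same]; simp
  have h11 : M i₁ i₁ = 0 := by rw [hM, hi₁, aux13_skew_blowup_same]; simp
  have step := aux13_key M i₀ i₁ hne h00 h01 h10 h11 hrow hcol
  rw [tdet, ← hM, step]
  -- now construct the equivalence with Σ v, Fin (a' v)
  have hbound : ∀ (v : V) (p : Fin (a' v)), (if v = i then p.val + 2 else p.val) < a v := by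
    intro v p
    by_cases h : v = i
    · subst h; have := p.2; rw [if_pos rfl]; omega
    · have := p.2; have h2 := hother v h; rw [if_neg h]; omega
  set g : (Σ v, Fin (a' v)) → (Σ v, Fin (a v)) :=
    fun x => ⟨x.1, ⟨if x.1 = i then x.2.val + 2 else x.2.val, hbound x.1 x.2⟩⟩ with hg
  have hgmem : ∀ x, g x ≠ i₀ ∧ g x ≠ i₁ := by
    rintro ⟨v, p⟩
    constructor
    · intro h
      have h2 : v = i := congrArg Sigma.fst h
      subst h2
      rw [hi₀, aux13_sigma_eq_iff] at h
      simp at h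
    · intro h
      have h2 : v = i := congrArg Sigma.fst h
      subst h2
      rw [hi₁, aux13_sigma_eq_iff] at h
      simp at h
  set f : (Σ v, Fin (a' v)) → {x : Σ v, Fin (a v) // x ≠ i₀ ∧ x ≠ i₁} :=
    fun x => ⟨g x, hgmem x⟩ with hf
  have hinj : Function.Injective f := by
    rintro ⟨v, p⟩ ⟨w, q⟩ h
    have h' : g ⟨v, p⟩ = g ⟨w, q⟩ := congrArg Subtype.val h
    have hfst : v = w := congrArg Sigma.fst h'
    subst hfst
    rw [aux13_sigma_eq_iff] at h'
    rw [aux13_sigma_eq_iff]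
    by_cases hv : v = i
    · simp [hv] at h'; omega
    · simp [hv] at h'; omega
  have hcard : Fintype.card (Σ v, Fin (a' v)) =
      Fintype.card {x : Σ v, Fin (a v) // x ≠ i₀ ∧ x ≠ i₁} := by
    have c1 : Fintype.card (Σ v, Fin (a v)) =
        2 + Fintype.card {x : Σ v, Fin (a v) // x ≠ i₀ ∧ x ≠ i₁} := by
      rw [← Fintype.card_congr (aux13_pairEquiv i₀ i₁ hne)]
      simp
    have c2 : Fintype.card (Σ v, Fin (a v)) = ∑ v, a v := by simp
    have c3 : Fintype.card (Σ v, Fin (a' v)) = ∑ v, a' v := by simp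
    have c4 : (∑ v, a v) = (∑ v, a' v) + 2 := by
      have : ∀ v ∈ Finset.univ, a v = a' v + (if v = i then 2 else 0) := by
        intro v _
        by_cases h : v = i
        · subst h; rw [if_pos rfl]; omega
        · have := hother v h; simp [h]; omega
      rw [Finset.sum_congr rfl this, Finset.sum_add_distrib, Finset.sum_ite_eq' Finset.univ i]
      simp
    omega
  have hbij : Function.Bijective f :=
    (Fintype.bijective_iff_injective_and_card f).mpr ⟨hinj, hcard⟩
  rw [← Matrix.det_submatrix_equiv_self (Equiv.ofBijective f hbij)]
  rw [tdet]
  congr 1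
  ext x y
  rcases x with ⟨v, p⟩
  rcases y with ⟨w, q⟩
  show M (g ⟨v, p⟩) (g ⟨w, q⟩) = skew (blowup r a') ⟨v, p⟩ ⟨w, q⟩
  by_cases hvw : v = w
  · subst hvw
    rw [hM, hg]
    rw [aux13_skew_blowup_same, aux13_skew_blowup_same]
    by_cases hv : v = i <;> simp [hv]
  · rw [hM, hg, aux13_skew_blowup_ne r a' v w hvw]
    exact aux13_skew_blowup_ne r a v w hvw _ _

lemma aux13_base {V : Type*} [Fintype V] [DecidableEq V] (r : V → V → Prop)
    (hirr : ∀ v, ¬ r v v) (a : V → ℕ) (hle : ∀ v, a v ≤ 1) :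
    tdet (blowup r a) = subdet r (Finset.univ.filter fun v => Odd (a v)) := by
  set s : Finset V := Finset.univ.filter fun v => Odd (a v) with hs
  have hmem : ∀ v, v ∈ s ↔ a v = 1 := by
    intro v
    rw [hs, Finset.mem_filter]
    constructor
    · rintro ⟨-, h⟩
      rcases h with ⟨k, hk⟩
      have := hle v
      omega
    · intro h
      exact ⟨Finset.mem_univ v, h ▸ odd_one⟩
  let e : {x // x ∈ s} ≃ (Σ v, Fin (a v)) :=
    { toFun := fun x => ⟨x.1, ⟨0, by have := (hmem x.1).mp x.2; omega⟩⟩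
      invFun := fun x => ⟨x.1, (hmem x.1).mpr (by have h1 := x.2.2; have := hle x.1; omega)⟩
      left_inv := by rintro ⟨v, hv⟩; rfl
      right_inv := by
        rintro ⟨v, p⟩
        exact (aux13_sigma_eq_iff a v _ p).mpr (by have h1 := p.2; have := hle v; omega)
      }
  rw [tdet, ← Matrix.det_submatrix_equiv_self e, subdet]
  congr 1
  ext ⟨v, hv⟩ ⟨w, hw⟩
  show skew (blowup r a) ⟨v, _⟩ ⟨w, _⟩ = skew r v w
  by_cases hvw : v = w
  · subst hvw
    rw [aux13_skew_blowup_same]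
    simp [skew, hirr v]
  · rw [aux13_skew_blowup_ne r a v w hvw]
    rfl

lemma aux13_mainaux {V : Type*} [Fintype V] [DecidableEq V] (r : V → V → Prop)
    (hirr : ∀ v, ¬ r v v) :
    ∀ (n : ℕ) (a : V → ℕ), (∑ v, a v) = n →
      tdet (blowup r a) = subdet r (Finset.univ.filter fun v => Odd (a v)) := by
  intro n
  induction n using Nat.strong_induction_on with
  | _ n ih =>
    intro a hsum
    by_cases h : ∃ i, 2 ≤ a i
    · obtain ⟨i, hi2⟩ := h
      set a' : V → ℕ := fun v => if v = i then a i - 2 else a v with ha'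
      have hi : a' i + 2 = a i := by simp only [ha', if_pos rfl]; omega
      have hother : ∀ v, v ≠ i → a' v = a v := fun v hv => if_neg hv
      have hsplit : (∑ v, a v) = (∑ v, a' v) + 2 := by
        have h1 : ∀ v ∈ Finset.univ, a v = a' v + (if v = i then 2 else 0) := by
          intro v _
          by_cases hv : v = i
          · subst hv; simp [ha']; omega
          · simp only [ha', if_neg hv]; omega
        rw [Finset.sum_congr rfl h1, Finset.sum_add_distrib,
          Finset.sum_ite_eq' Finset.univ i]
        simp
      have hsum' : (∑ v, a' v) < n := by omega
      rw [aux13_reduce r a a' i hi hother, ih _ hsum' a' rfl]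
      congr 1
      apply Finset.filter_congr
      intro v _
      by_cases hv : v = i
      · subst hv
        simp only [ha', if_pos rfl, Nat.odd_iff]
        constructor <;> intro h <;> omega
      · simp only [ha', if_neg hv]
    · push_neg at h
      exact aux13_base r hirr a (fun v => by have := h v; omega)


theorem stmt13 {V : Type*} [Fintype V] [DecidableEq V] (r : V → V → Prop)
    (hT : IsTournament r) (a : V → ℕ) (ha : ∀ i, 0 < a i) :
    ((Finset.univ.filter fun v => Odd (a v)).Nonempty →
      tdet (blowup r a) = subdet r (Finset.univ.filter fun v => Odd (a v))) ∧
    ((Finset.univ.filter fun v => Odd (a v)) = ∅ → tdet (blowup r a) = 1) := by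
  have hmain := aux13_mainaux r hT.1 (∑ v, a v) a rfl
  refine ⟨fun _ => hmain, fun hempty => ?_⟩
  rw [hmain, hempty]
  haveI : IsEmpty {x : V // x ∈ (∅ : Finset V)} :=
    ⟨fun x => absurd x.2 (Finset.notMem_empty _)⟩
  exact Matrix.det_isEmpty
end

section
/- Let R be a tournament on n vertices and R(a_1,...,a_n) a transitive blowup of R. Then R ∈ D_k if and only if R(a_1,...,a_n) ∈ D_k, where D_k is the class of tournaments all of whose subtournaments have determinant at most k^2. -/
open scoped Classical

/-!
Two vertices `u < v` of `s` in one blob of the blowup, with no vertex of `s` of that blob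
strictly between them, are twins: their rows and their columns in the skew-adjacency matrix
agree outside `{u, v}`, and the `{u, v}` block is `!![0, 1; -1, 0]`. Two elementary operations
turn row `u` and column `v` into unit vectors, so deleting such a pair does not change a
subdeterminant. Hence the subtournament of the blowup on `s` has the determinant of the
subtournament of `R` on the blobs that `s` meets an odd number of times; conversely `R` itself
is a subtournament of the blowup.
-/

open Finset

namespace Matrix

variable {n R : Type*} [Fintype n] [DecidableEq n] [CommRing R]

theorem det_eq_mul_det_submatrix_ne_of_row (M : Matrix n n R) (u : n)
    (h : ∀ j, j ≠ u → M u j = 0) :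
    M.det = M u u * (M.submatrix (Subtype.val : {j // j ≠ u} → n) Subtype.val).det := by
  rw [M.twoBlockTriangular_det' (· = u) fun i hi j hj => hi ▸ h j hj]
  congr 1
  convert det_eq_elem_of_subsingleton _ (⟨u, rfl⟩ : {j // j = u})
  rfl

theorem det_eq_mul_det_submatrix_ne_of_col (M : Matrix n n R) (v : n)
    (h : ∀ i, i ≠ v → M i v = 0) :
    M.det = M v v * (M.submatrix (Subtype.val : {i // i ≠ v} → n) Subtype.val).det := by
  rw [M.twoBlockTriangular_det (· = v) fun i hi j hj => hj ▸ h i hi]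
  congr 1
  convert det_eq_elem_of_subsingleton _ (⟨v, rfl⟩ : {i // i = v})
  rfl

theorem det_eq_det_submatrix_of_twins (M : Matrix n n R) {u v : n} (huv : u ≠ v)
    (huu : M u u = 0) (hvv : M v v = 0) (hu_v : M u v = 1) (hv_u : M v u = -1)
    (hrow : ∀ w, w ≠ u → w ≠ v → M u w = M v w)
    (hcol : ∀ w, w ≠ u → w ≠ v → M w u = M w v) :
    M.det = (M.submatrix (Subtype.val : {w // w ≠ u ∧ w ≠ v} → n) Subtype.val).det := by
  set M₁ := M.updateRow u (M u + (-1 : R) • M v)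
  set M₂ := M₁.updateCol v (fun k => M₁ k v + (-1 : R) • M₁ k u)
  have hM₂ : ∀ i j, M₂ i j = if j = v then
      (if i = u then M u v - M v v else M i v) - (if i = u then M u u - M v u else M i u)
      else if i = u then M u j - M v j else M i j := by
    intro i j
    simp only [M₂, M₁, updateCol_apply, updateRow_apply]
    split_ifs <;> simp [sub_eq_add_neg]
  set N := M₂.submatrix (Subtype.val : {j // j ≠ u} → n) Subtype.val
  have hdet : M.det = M₂.det := by
    rw [det_updateCol_add_smul_self _ huv.symm, det_updateRow_add_smul_self _ huv]
  rw [hdet, M₂.det_eq_mul_det_submatrix_ne_of_row u fun j hj => ?row,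
    N.det_eq_mul_det_submatrix_ne_of_col ⟨v, huv.symm⟩ fun i hi => ?col]
  · have hu : M₂ u u = 1 := by simp [hM₂, huv, huu, hv_u]
    have hv : N ⟨v, huv.symm⟩ ⟨v, huv.symm⟩ = 1 := by simp [N, hM₂, huv.symm, hvv, hv_u]
    rw [hu, hv, one_mul, one_mul, submatrix_submatrix]
    let e : {w // w ≠ u ∧ w ≠ v} ≃ {j : {j // j ≠ u} // j ≠ ⟨v, huv.symm⟩} :=
      (Equiv.subtypeSubtypeEquivSubtypeInter (· ≠ u) (· ≠ v)).symm.trans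
        (Equiv.subtypeEquivRight fun _ => by simp [Subtype.ext_iff])
    have he : ∀ w, ((e w : {j // j ≠ u}) : n) = w := fun _ => rfl
    rw [← det_submatrix_equiv_self e]
    congr 1
    ext i j
    simp [hM₂, he, i.2.1, j.2.2]
  case row =>
    by_cases hjv : j = v
    · subst hjv; simp [hM₂, hu_v, hvv, huu, hv_u]
    · simp [hM₂, hjv, hrow j hj hjv]
  case col =>
    have hiv : i.1 ≠ v := fun h => hi (Subtype.ext h)
    simp [N, hM₂, i.2, hcol i.1 i.2 hiv]

end Matrix

section Skew

variable {V W : Type*}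

theorem skew_apply_self {r : V → V → Prop} {x : V} (h : ¬ r x x) : skew r x x = 0 := by
  simp [skew, h]

theorem skew_apply_of_rel {r : V → V → Prop} {x y : V} (h : r x y) : skew r x y = 1 := by
  simp [skew, h]

theorem skew_apply_of_rel_swap {r : V → V → Prop} {x y : V} (h : r y x) (h' : ¬ r x y) :
    skew r x y = -1 := by
  simp [skew, h, h']

theorem skew_congr {r : V → V → Prop} {r' : W → W → Prop} {x y : V} {x' y' : W}
    (h₁ : r x y ↔ r' x' y') (h₂ : r y x ↔ r' y' x') : skew r x y = skew r' x' y' := by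
  simp only [skew, Matrix.of_apply, h₁, h₂]

variable [Fintype V] [DecidableEq V] [Fintype W] [DecidableEq W]

theorem subdet_image_of_injOn (r : V → V → Prop) (r' : W → W → Prop) (f : V → W)
    {s : Finset V} (hf : Set.InjOn f s) (h : ∀ x ∈ s, ∀ y ∈ s, skew r' (f x) (f y) = skew r x y) :
    subdet r' (s.image f) = subdet r s := by
  let e : s ≃ s.image f := Equiv.ofBijective (fun x => ⟨f x, mem_image_of_mem f x.2⟩)
    ⟨fun x y hxy => Subtype.ext (hf x.2 y.2 (congrArg Subtype.val hxy)), fun ⟨y, hy⟩ => by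
      obtain ⟨x, hx, rfl⟩ := mem_image.mp hy
      exact ⟨⟨x, hx⟩, rfl⟩⟩
  rw [subdet, ← Matrix.det_submatrix_equiv_self e]
  congr 1
  ext x y
  exact h x x.2 y y.2

theorem subdet_erase_erase_of_twins (r : V → V → Prop) {s : Finset V} {u v : V}
    (hu : u ∈ s) (hv : v ∈ s) (huv : u ≠ v) (huu : ¬ r u u) (hvv : ¬ r v v)
    (hu_v : r u v) (hv_u : ¬ r v u)
    (hrow : ∀ w ∈ s, w ≠ u → w ≠ v → skew r u w = skew r v w)
    (hcol : ∀ w ∈ s, w ≠ u → w ≠ v → skew r w u = skew r w v) :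
    subdet r s = subdet r ((s.erase u).erase v) := by
  have hne : (⟨u, hu⟩ : s) ≠ ⟨v, hv⟩ := fun h => huv (congrArg Subtype.val h)
  rw [subdet, subdet, Matrix.det_eq_det_submatrix_of_twins
    ((skew r).submatrix (fun x : s => x.1) (fun x : s => x.1)) hne (skew_apply_self huu)
    (skew_apply_self hvv) (skew_apply_of_rel hu_v) (skew_apply_of_rel_swap hu_v hv_u)
    (fun w hwu hwv => hrow w w.2 (Subtype.coe_ne_coe.mpr hwu) (Subtype.coe_ne_coe.mpr hwv))
    (fun w hwu hwv => hcol w w.2 (Subtype.coe_ne_coe.mpr hwu) (Subtype.coe_ne_coe.mpr hwv))]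
  let e : {w : s // w ≠ ⟨u, hu⟩ ∧ w ≠ ⟨v, hv⟩} ≃ (s.erase u).erase v :=
    (Equiv.subtypeEquivRight fun w => by simp [Subtype.ext_iff, and_comm]).trans
      (Equiv.subtypeSubtypeEquivSubtype fun hw => mem_of_mem_erase (mem_of_mem_erase hw))
  rw [← Matrix.det_submatrix_equiv_self e]
  rfl

end Skew

theorem Finset.exists_two_least {α : Type*} [LinearOrder α] {t : Finset α} (ht : 1 < #t) :
    ∃ u ∈ t, ∃ v ∈ t, u < v ∧ ∀ p ∈ t, p ≠ u → v ≤ p := by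
  have hne : t.Nonempty := card_pos.mp (by omega)
  have hne' : (t.erase (t.min' hne)).Nonempty := by
    rw [← card_pos, card_erase_of_mem (t.min'_mem hne)]; omega
  obtain ⟨hvu, hv⟩ := mem_erase.mp ((t.erase (t.min' hne)).min'_mem hne')
  exact ⟨_, t.min'_mem hne, _, hv, (t.min'_le _ hv).lt_of_ne' hvu,
    fun p hp hpu => min'_le _ _ (mem_erase.mpr ⟨hpu, hp⟩)⟩

section Blowup

variable {V : Type*} [DecidableEq V] {r : V → V → Prop} {a : V → ℕ}

theorem blowup_mk_mk {i : V} {p q : Fin (a i)} : blowup r a ⟨i, p⟩ ⟨i, q⟩ ↔ p < q := by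
  simp [blowup, blowupG]

theorem blowup_of_fst_ne {x y : Σ i, Fin (a i)} (h : x.1 ≠ y.1) :
    blowup r a x y ↔ r x.1 y.1 := by
  simp [blowup, blowupG, h]

theorem skew_blowup_of_fst_ne {x y : Σ i, Fin (a i)} (h : x.1 ≠ y.1) :
    skew (blowup r a) x y = skew r x.1 y.1 :=
  skew_congr (blowup_of_fst_ne h) (blowup_of_fst_ne (Ne.symm h))

theorem skew_blowup_of_fst_eq_imp_eq (hr : ∀ i, ¬ r i i) {x y : Σ i, Fin (a i)}
    (h : x.1 = y.1 → x = y) : skew (blowup r a) x y = skew r x.1 y.1 := by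
  by_cases hxy : x.1 = y.1
  · obtain rfl := h hxy
    rw [skew_apply_self (blowup_mk_mk.not.mpr (lt_irrefl x.2)), skew_apply_self (hr _)]
  · exact skew_blowup_of_fst_ne hxy

variable (a) in
def fibre (s : Finset (Σ i, Fin (a i))) (i : V) : Finset (Fin (a i)) :=
  univ.filter fun p => ⟨i, p⟩ ∈ s

theorem mem_fibre {s : Finset (Σ i, Fin (a i))} {i : V} {p : Fin (a i)} :
    p ∈ fibre a s i ↔ ⟨i, p⟩ ∈ s := by
  simp [fibre]

theorem fibre_erase_mk_self (s : Finset (Σ i, Fin (a i))) (i : V) (p : Fin (a i)) :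
    fibre a (s.erase ⟨i, p⟩) i = (fibre a s i).erase p := by
  ext q
  simp [fibre]

theorem fibre_erase_mk_of_ne (s : Finset (Σ i, Fin (a i))) {i j : V} (p : Fin (a i))
    (hji : j ≠ i) : fibre a (s.erase ⟨i, p⟩) j = fibre a s j := by
  ext q
  simp [fibre, hji]

variable [Fintype V]

variable (a) in
def oddBlobs (s : Finset (Σ i, Fin (a i))) : Finset V :=
  univ.filter fun i => Odd #(fibre a s i)

theorem oddBlobs_erase_erase {s : Finset (Σ i, Fin (a i))} {i : V} {u v : Fin (a i)}
    (hu : u ∈ fibre a s i) (hv : v ∈ fibre a s i) (huv : u ≠ v) :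
    oddBlobs a ((s.erase ⟨i, u⟩).erase ⟨i, v⟩) = oddBlobs a s := by
  ext j
  simp only [oddBlobs, mem_filter, mem_univ, true_and]
  by_cases hji : j = i
  · subst hji
    rw [fibre_erase_mk_self, fibre_erase_mk_self,
      card_erase_of_mem (mem_erase.mpr ⟨huv.symm, hv⟩), card_erase_of_mem hu, Nat.odd_iff,
      Nat.odd_iff]
    have := one_lt_card.mpr ⟨u, hu, v, hv, huv⟩
    omega
  · rw [fibre_erase_mk_of_ne _ _ hji, fibre_erase_mk_of_ne _ _ hji]

theorem subdet_blowup_erase_erase_of_twins {s : Finset (Σ i, Fin (a i))} {i : V}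
    {u v : Fin (a i)} (hu : u ∈ fibre a s i) (hv : v ∈ fibre a s i) (huv : u < v)
    (hmin : ∀ p ∈ fibre a s i, p ≠ u → v ≤ p) :
    subdet (blowup r a) s = subdet (blowup r a) ((s.erase ⟨i, u⟩).erase ⟨i, v⟩) := by
  have htwin : ∀ w ∈ s, w ≠ ⟨i, u⟩ → w ≠ ⟨i, v⟩ →
      (blowup r a ⟨i, u⟩ w ↔ blowup r a ⟨i, v⟩ w) ∧
        (blowup r a w ⟨i, u⟩ ↔ blowup r a w ⟨i, v⟩) := by
    rintro ⟨j, p⟩ hw hwu hwv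
    by_cases hji : j = i
    · subst hji
      have hvp : v < p := (hmin p (mem_fibre.mpr hw) (by rintro rfl; exact hwu rfl)).lt_of_ne
        (by rintro rfl; exact hwv rfl)
      simp only [blowup_mk_mk]
      exact ⟨iff_of_true (huv.trans hvp) hvp, iff_of_false (huv.trans hvp).asymm hvp.asymm⟩
    · simp [blowup_of_fst_ne, hji, Ne.symm hji]
  exact subdet_erase_erase_of_twins _ (mem_fibre.mp hu) (mem_fibre.mp hv) (by simp [huv.ne])
    (blowup_mk_mk.not.mpr (lt_irrefl u)) (blowup_mk_mk.not.mpr (lt_irrefl v))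
    (blowup_mk_mk.mpr huv) (blowup_mk_mk.not.mpr huv.asymm)
    (fun w hw hwu hwv => skew_congr (htwin w hw hwu hwv).1 (htwin w hw hwu hwv).2)
    (fun w hw hwu hwv => skew_congr (htwin w hw hwu hwv).2 (htwin w hw hwu hwv).1)

theorem subdet_blowup_of_card_fibre_le_one (hr : ∀ i, ¬ r i i) {s : Finset (Σ i, Fin (a i))}
    (hs : ∀ i, #(fibre a s i) ≤ 1) : subdet (blowup r a) s = subdet r (oddBlobs a s) := by
  have hinj : Set.InjOn Sigma.fst (s : Set (Σ i, Fin (a i))) := by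
    rintro ⟨i, p⟩ hp ⟨j, q⟩ hq (rfl : i = j)
    rw [card_le_one.mp (hs i) p (mem_fibre.mpr hp) q (mem_fibre.mpr hq)]
  have hblobs : oddBlobs a s = s.image Sigma.fst := by
    ext i
    simp only [oddBlobs, mem_filter, mem_univ, true_and, mem_image]
    have hodd : Odd #(fibre a s i) ↔ (fibre a s i).Nonempty := by
      rw [← card_pos]
      exact ⟨Odd.pos, fun h => by rw [show #(fibre a s i) = 1 by grind [hs i]]; exact odd_one⟩
    rw [hodd]
    exact ⟨fun ⟨p, hp⟩ => ⟨⟨i, p⟩, mem_fibre.mp hp, rfl⟩,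
      by rintro ⟨⟨j, p⟩, hp, rfl⟩; exact ⟨p, mem_fibre.mpr hp⟩⟩
  rw [hblobs, subdet_image_of_injOn _ _ _ hinj fun x hx y hy =>
    (skew_blowup_of_fst_eq_imp_eq hr fun h => hinj hx hy h).symm]

theorem subdet_blowup (hr : ∀ i, ¬ r i i) (s : Finset (Σ i, Fin (a i))) :
    subdet (blowup r a) s = subdet r (oddBlobs a s) := by
  induction s using Finset.strongInduction with
  | H s ih =>
  by_cases hs : ∀ i, #(fibre a s i) ≤ 1
  · exact subdet_blowup_of_card_fibre_le_one hr hs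
  push Not at hs
  obtain ⟨i, hi⟩ := hs
  obtain ⟨u, hu, v, hv, huv, hmin⟩ := exists_two_least hi
  have hsub : (s.erase ⟨i, u⟩).erase ⟨i, v⟩ ⊂ s :=
    (erase_subset _ _).trans_ssubset (erase_ssubset (mem_fibre.mp hu))
  rw [subdet_blowup_erase_erase_of_twins hu hv huv hmin, ih _ hsub,
    oddBlobs_erase_erase hu hv huv.ne]

end Blowup

theorem stmt14_general {V : Type*} [Fintype V] [DecidableEq V] (r : V → V → Prop)
    (hT : IsTournament r) (a : V → ℕ) (ha : ∀ i, 0 < a i) (k : ℕ) :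
    memD r k ↔ memD (blowup r a) k := by
  constructor
  · intro h s
    rw [subdet_blowup hT.1 s]
    exact h _
  · intro h s
    let f : V → Σ i, Fin (a i) := fun i => ⟨i, ⟨0, ha i⟩⟩
    rw [← subdet_image_of_injOn r (blowup r a) f (fun x _ y _ hxy => congrArg Sigma.fst hxy)
      fun x _ y _ => skew_blowup_of_fst_eq_imp_eq hT.1 fun hxy => congrArg f hxy]
    exact h _

theorem stmt14 {V : Type*} [Fintype V] [DecidableEq V] (r : V → V → Prop)
    (hT : IsTournament r) (a : V → ℕ) (ha : ∀ i, 0 < a i) (k : ℕ) (hk : Odd k) :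
    memD r k ↔ memD (blowup r a) k :=
  stmt14_general r hT a ha k
end

section
/- Let R be a tournament on n ≥ 2 vertices and T_1,...,T_n tournaments such that some T_i is not transitive. Then the blowup R(T_1,...,T_n) contains a subtournament R_s with det(R_s) = 9·det(R). -/
open scoped Classical

lemma skew_neg' {V : Type*} {r : V → V → Prop} (h : IsTournament r) :
    ∀ x y, skew r y x = - skew r x y := by
  intro x y
  by_cases hxy : x = y
  · subst hxy; simp [skew, h.1 x]
  · by_cases h1 : r x y
    · have h2 : ¬ r y x := (h.2 x y hxy).mp h1
      simp [skew, h1, h2]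
    · by_cases h2 : r y x
      · simp [skew, h1, h2]
      · simp [skew, h1, h2]

lemma det_aux' {V : Type*} [Fintype V] [DecidableEq V] (M : Matrix V V ℤ)
    (hM : ∀ x y, M y x = - M x y) (i₀ : V) :
    (Matrix.fromBlocks M
      (Matrix.of fun x (j : Fin 2) => if x = i₀ then (if j = 0 then 1 else -1) else M x i₀)
      (Matrix.of fun (j : Fin 2) y => if y = i₀ then (if j = 0 then -1 else 1) else M i₀ y)
      (!![0,1;-1,0] : Matrix (Fin 2) (Fin 2) ℤ)).det = 9 * M.det := by
  have hdiag : ∀ x, M x x = 0 := fun x => by have := hM x x; linarith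
  set B : Matrix V (Fin 2) ℤ :=
    Matrix.of (fun x (j : Fin 2) => if x = i₀ then (if j = 0 then 1 else -1) else M x i₀) with hB
  set C : Matrix (Fin 2) V ℤ :=
    Matrix.of (fun (j : Fin 2) y => if y = i₀ then (if j = 0 then -1 else 1) else M i₀ y) with hC
  letI : Invertible (!![0,1;-1,0] : Matrix (Fin 2) (Fin 2) ℤ) :=
    ⟨!![0,-1;1,0], by ext i j; fin_cases i <;> fin_cases j <;>
        simp [Matrix.mul_apply, Fin.sum_univ_two],
      by ext i j; fin_cases i <;> fin_cases j <;>
        simp [Matrix.mul_apply, Fin.sum_univ_two]⟩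
  rw [Matrix.det_fromBlocks₂₂]
  have hinv : (⅟(!![0,1;-1,0] : Matrix (Fin 2) (Fin 2) ℤ)) = !![0,-1;1,0] := rfl
  rw [hinv]
  have hD : (!![0,1;-1,0] : Matrix (Fin 2) (Fin 2) ℤ).det = 1 := by
    simp [Matrix.det_fin_two_of]
  rw [hD, one_mul]
  set Q : Matrix V V ℤ := Matrix.diagonal (fun x => if x = i₀ then 3 else 1) with hQ
  have key : M - B * (!![0,-1;1,0] : Matrix (Fin 2) (Fin 2) ℤ) * C = Q * M * Q := by
    ext x y
    have hrhs : (Q * M * Q) x y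
        = (if x = i₀ then 3 else 1) * M x y * (if y = i₀ then 3 else 1) := by
      simp [hQ, Matrix.diagonal_mul, Matrix.mul_diagonal]
    rw [Matrix.sub_apply, hrhs]
    simp only [Matrix.mul_apply, Fin.sum_univ_two, Matrix.of_apply, hB, hC]
    by_cases hx : x = i₀ <;> by_cases hy : y = i₀
    · subst hx; subst hy; simp [hdiag]
    · simp [hx, hy, hdiag]; ring
    · simp [hx, hy, hdiag]; ring
    · simp [hx, hy]
  rw [key, Matrix.det_mul, Matrix.det_mul, hQ, Matrix.det_diagonal]
  have : (∏ x, if x = i₀ then (3:ℤ) else 1) = 3 := by simp [Finset.prod_ite_eq']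
  rw [this]; ring

theorem stmt15 {V : Type*} [Fintype V] [DecidableEq V] (r : V → V → Prop)
    (hT : IsTournament r) (hn : 2 ≤ Fintype.card V)
    {κ : V → Type*} [∀ i, Fintype (κ i)] [∀ i, DecidableEq (κ i)] [∀ i, Nonempty (κ i)]
    (t : ∀ i, κ i → κ i → Prop) (ht : ∀ i, IsTournament (t i))
    (hnt : ∃ i, ¬ IsTransitive (t i)) :
    ∃ s : Finset (Σ i, κ i), subdet (blowupG r t) s = 9 * tdet r := by
  obtain ⟨i₀, hi₀⟩ := hnt
  rw [IsTransitive] at hi₀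
  push_neg at hi₀
  obtain ⟨a, b, c, hab, hbc, hacn⟩ := hi₀
  have hab' : a ≠ b := fun h => (ht i₀).1 b (h ▸ hab)
  have hbc' : b ≠ c := fun h => (ht i₀).1 c (h ▸ hbc)
  have hac' : a ≠ c := by
    rintro rfl
    exact ((ht i₀).2 a b hab').mp hab hbc
  have hca : t i₀ c a := by
    by_contra h
    exact hacn (((ht i₀).2 a c hac').mpr h)
  have hban : ¬ t i₀ b a := ((ht i₀).2 a b hab').mp hab
  have hcbn : ¬ t i₀ c b := ((ht i₀).2 b c hbc').mp hbc
  obtain ⟨g, hg⟩ : ∃ g : ∀ j, κ j, g i₀ = a :=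
    ⟨Function.update (fun j => Classical.arbitrary (κ j)) i₀ a, Function.update_self _ _ _⟩
  obtain ⟨F, hF1, hF2⟩ : ∃ F : V ⊕ Fin 2 → Σ i, κ i,
      (∀ x, F (.inl x) = ⟨x, g x⟩) ∧
      (∀ j : Fin 2, F (.inr j) = ⟨i₀, if j = 0 then b else c⟩) :=
    ⟨Sum.elim (fun x => ⟨x, g x⟩) (fun j => ⟨i₀, if j = 0 then b else c⟩),
      fun _ => rfl, fun _ => rfl⟩
  have habn : a ≠ b := hab'
  have hinj : Function.Injective F := by
    rintro (x | j) (y | k) h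
    · rw [hF1, hF1] at h
      have := congrArg Sigma.fst h
      simpa using this
    · exfalso
      rw [hF1, hF2] at h
      have h1 : x = i₀ := by simpa using congrArg Sigma.fst h
      subst h1
      have h2 : g x = (if k = 0 then b else c) := by
        rw [Sigma.mk.inj_iff] at h
        exact eq_of_heq h.2
      rw [hg] at h2
      by_cases hk : k = 0
      · rw [if_pos hk] at h2; exact hab' h2
      · rw [if_neg hk] at h2; exact hac' h2
    · exfalso
      rw [hF1, hF2] at h
      have h1 : i₀ = y := by simpa using congrArg Sigma.fst h
      subst h1
      have h2 : (if j = 0 then b else c) = g i₀ := by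
        rw [Sigma.mk.inj_iff] at h
        exact eq_of_heq h.2
      rw [hg] at h2
      by_cases hj : j = 0
      · rw [if_pos hj] at h2; exact hab' h2.symm
      · rw [if_neg hj] at h2; exact hac' h2.symm
    · rw [hF2, hF2, Sigma.mk.inj_iff] at h
      have h2 : (if j = 0 then b else c) = (if k = 0 then b else c) := eq_of_heq h.2
      fin_cases j <;> fin_cases k <;> simp_all
  refine ⟨Finset.image F Finset.univ, ?_⟩
  set s : Finset (Σ i, κ i) := Finset.image F Finset.univ with hs
  have hmem : ∀ z, F z ∈ s := fun z => by simp [hs]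
  have hbij : Function.Bijective (fun z => (⟨F z, hmem z⟩ : {x // x ∈ s})) := by
    constructor
    · intro z w hzw
      exact hinj (by simpa [Subtype.ext_iff] using hzw)
    · rintro ⟨x, hx⟩
      rw [hs, Finset.mem_image] at hx
      obtain ⟨z, _, hz⟩ := hx
      exact ⟨z, Subtype.ext hz⟩
  have hsub : subdet (blowupG r t) s
      = ((skew (blowupG r t)).submatrix F F).det := by
    rw [subdet, ← Matrix.det_submatrix_equiv_self (Equiv.ofBijective _ hbij),
      Matrix.submatrix_submatrix]
    congr 1
  have hmat : (skew (blowupG r t)).submatrix F F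
      = Matrix.fromBlocks (skew r)
        (Matrix.of fun x (j : Fin 2) => if x = i₀ then (if j = 0 then 1 else -1) else (skew r) x i₀)
        (Matrix.of fun (j : Fin 2) y => if y = i₀ then (if j = 0 then -1 else 1) else (skew r) i₀ y)
        (!![0,1;-1,0] : Matrix (Fin 2) (Fin 2) ℤ) := by
    ext z w
    rcases z with x | j <;> rcases w with y | k
    · rw [Matrix.submatrix_apply, hF1, hF1]
      by_cases hxy : x = y
      · subst hxy
        simp [skew, blowupG, (ht x).1, hT.1 x]
      · simp [skew, blowupG, hxy, Ne.symm hxy]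
    · rw [Matrix.submatrix_apply, hF1, hF2]
      by_cases hx : x = i₀
      · subst hx
        rw [hg]
        by_cases hk : k = 0
        · simp [hk, skew, blowupG, hab, hban]
        · simp [hk, skew, blowupG, hacn, hca]
      · by_cases hk : k = 0 <;>
          simp [hk, hx, skew, blowupG, Ne.symm hx]
    · rw [Matrix.submatrix_apply, hF2, hF1]
      by_cases hy : y = i₀
      · subst hy
        rw [hg]
        by_cases hj : j = 0
        · simp [hj, skew, blowupG, hab, hban]
        · simp [hj, skew, blowupG, hca, hacn]
      · by_cases hj : j = 0 <;>
          simp [hj, hy, skew, blowupG, Ne.symm hy]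
    · rw [Matrix.submatrix_apply, hF2, hF2]
      fin_cases j <;> fin_cases k <;>
        simp [skew, blowupG, hbc, hcbn, (ht i₀).1]
  rw [hsub, hmat, det_aux' (skew r) (skew_neg' hT) i₀, tdet]
end

section
/- For every even integer n ≥ 4, det(L_n) = det(L_{n-2}) + 4(n-2); consequently, det(L_n) = (n-1)^2 for every even n ≥ 2. -/
/-!
Let `T` be the skew matrix of the transitive tournament on `Fin n`. The skew matrix of `L_n` is
`T + c eᵀ - e cᵀ`, where `e` marks the last vertex and `c` is `-2` at the chain vertices of even
index, whose arcs to the last vertex are reversed relative to `T`. For even `n`, `T` has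
determinant `1` and the skew-symmetric inverse `D T D` with `D = diag((-1)^i)`. An alternating
rank-two perturbation `c eᵀ - e cᵀ` of a matrix with skew-symmetric inverse `B` multiplies its
determinant by `(1 + eᵀ B c)²`, and here `eᵀ B c = -n`; hence `det L_n = (n - 1)²`, and the
recursion is the difference of two consecutive squares.
-/

open scoped Classical

open Matrix Finset

section SkewPerturbation

variable {R : Type*} [CommRing R] {m : Type*} [Fintype m]

theorem dotProduct_mulVec_of_transpose_eq_neg {B : Matrix m m R} (hB : Bᵀ = -B) (u v : m → R) :
    u ⬝ᵥ B *ᵥ v = -(v ⬝ᵥ B *ᵥ u) := by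
  rw [dotProduct_mulVec, dotProduct_comm, ← mulVec_transpose, hB, neg_mulVec, dotProduct_neg]

theorem dotProduct_mulVec_self_of_transpose_eq_neg [IsAddTorsionFree R] {B : Matrix m m R}
    (hB : Bᵀ = -B) (u : m → R) : u ⬝ᵥ B *ᵥ u = 0 := by
  have h := dotProduct_mulVec_of_transpose_eq_neg hB u u
  have : (2 : ℕ) • (u ⬝ᵥ B *ᵥ u) = (2 : ℕ) • 0 := by
    rw [two_nsmul, smul_zero]
    linear_combination h
  exact nsmul_right_injective two_ne_zero this

theorem det_add_vecMulVec_sub_vecMulVec [DecidableEq m] [IsAddTorsionFree R] {A B : Matrix m m R}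
    (hAB : A * B = 1) (hB : Bᵀ = -B) (u v : m → R) :
    (A + vecMulVec u v - vecMulVec v u).det = A.det * (1 + v ⬝ᵥ B *ᵥ u) ^ 2 := by
  let U : Matrix m (Fin 2) R := of fun i k => ![u i, v i] k
  let V : Matrix (Fin 2) m R := of ![v, -u]
  have hUV : vecMulVec u v - vecMulVec v u = U * V := by
    ext i j
    simp [U, V, vecMulVec_apply, mul_apply, Fin.sum_univ_two, sub_eq_add_neg]
  have hfac : A + vecMulVec u v - vecMulVec v u = A * (1 + B * U * V) := by
    rw [add_sub_assoc, hUV, Matrix.mul_add, Matrix.mul_one, ← Matrix.mul_assoc,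
      ← Matrix.mul_assoc, hAB, Matrix.one_mul]
  have hVBU : V * (B * U) = !![v ⬝ᵥ B *ᵥ u, v ⬝ᵥ B *ᵥ v; -(u ⬝ᵥ B *ᵥ u), -(u ⬝ᵥ B *ᵥ v)] := by
    ext i k
    fin_cases i <;> fin_cases k <;> simp [U, V, mul_apply, dotProduct, mulVec, Finset.mul_sum]
  have hscalar : 1 + V * (B * U) = (1 + v ⬝ᵥ B *ᵥ u) • (1 : Matrix (Fin 2) (Fin 2) R) := by
    rw [hVBU, dotProduct_mulVec_self_of_transpose_eq_neg hB,
      dotProduct_mulVec_self_of_transpose_eq_neg hB, dotProduct_mulVec_of_transpose_eq_neg hB u v]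
    ext i k
    fin_cases i <;> fin_cases k <;> simp [one_apply]
  rw [hfac, det_mul, det_one_add_mul_comm (B * U) V, hscalar, det_smul, det_one, Fintype.card_fin,
    mul_one]

end SkewPerturbation

theorem skew_transpose_of_asymm {V : Type*} {r : V → V → Prop} (hr : ∀ i j, r i j → ¬ r j i) :
    (skew r)ᵀ = -skew r := by
  ext i j
  simp only [transpose_apply, neg_apply, skew, of_apply]
  split_ifs <;> grind

theorem sum_range_ite_lt {M : Type*} [AddCommMonoid M] (f : ℕ → M) {m n : ℕ} (h : m ≤ n) :
    ∑ k ∈ range n, (if k < m then f k else 0) = ∑ k ∈ range m, f k := by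
  rw [← sum_filter]
  congr 1
  ext k
  simp only [mem_filter, mem_range]
  omega

theorem det_skew_lt_fin_two_mul (m : ℕ) : (skew fun i j : Fin (2 * m) => i < j).det = 1 := by
  induction m with
  | zero => exact det_fin_zero
  | succ m ih =>
    let J : Matrix (Fin 2) (Fin 2) ℤ := !![0, 1; -1, 0]
    have hJ : J * -J = 1 := by ext i j; fin_cases i <;> fin_cases j <;> simp [J]
    have : Invertible J := invertibleOfRightInverse J (-J) hJ
    have hblocks :
        (skew fun i j : Fin (2 * m + 2) => i < j).submatrix finSumFinEquiv finSumFinEquiv =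
          fromBlocks (skew fun i j : Fin (2 * m) => i < j) (of fun _ _ => 1) (of fun _ _ => -1) J := by
      ext (i | i) (j | j)
      all_goals simp only [submatrix_apply, finSumFinEquiv_apply_left, finSumFinEquiv_apply_right,
        fromBlocks_apply₁₁, fromBlocks_apply₁₂, fromBlocks_apply₂₁, fromBlocks_apply₂₂, skew,
        of_apply, Fin.lt_def, Fin.val_castAdd, Fin.val_natAdd]
      all_goals try (split_ifs <;> omega)
      fin_cases i <;> fin_cases j <;> simp [J]
    -- `⅟J = -J` has entry sum zero, so the Schur complement of `J` is just the smaller block.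
    have hcorr : of (fun (_ : Fin (2 * m)) (_ : Fin 2) => (1 : ℤ)) * ⅟J *
        of (fun (_ : Fin 2) (_ : Fin (2 * m)) => (-1 : ℤ)) = 0 := by
      rw [invOf_eq_right_inv hJ]
      ext i j
      simp [J, mul_apply, Fin.sum_univ_two]
    change (skew fun i j : Fin (2 * m + 2) => i < j).det = 1
    rw [← det_submatrix_equiv_self finSumFinEquiv, hblocks, det_fromBlocks₂₂, hcorr, sub_zero, ih]
    simp [J]

section NatSkew

local notation "σ" => skew fun a b : ℕ => a < b

-- Writing the product through the indicators of `k < m` reduces the sums below to partial sums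
-- of `(-1) ^ k`.
theorem skew_lt_mul_neg_one_pow_mul_skew_lt_of_lt {i j : ℕ} (hij : i < j) (k : ℕ) :
    σ i k * (-1) ^ k * σ k j = -(-1) ^ k + (if k < j + 1 then (-1) ^ k else 0)
      - (if k < i then (-1) ^ k else 0) + (if k < j then (-1) ^ k else 0)
      - (if k < i + 1 then (-1) ^ k else 0) := by
  simp only [skew, of_apply]
  split_ifs <;> omega

theorem skew_lt_mul_neg_one_pow_mul_skew_lt_self (i k : ℕ) :
    σ i k * (-1) ^ k * σ k i = -(-1) ^ k + (if k < i + 1 then (-1) ^ k else 0)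
      - (if k < i then (-1) ^ k else 0) := by
  simp only [skew, of_apply]
  split_ifs <;> omega

theorem sum_skew_lt_mul_neg_one_pow_mul_skew_lt_of_lt {n i j : ℕ} (hn : Even n) (hij : i < j)
    (hj : j < n) : ∑ k ∈ range n, σ i k * (-1) ^ k * σ k j = 0 := by
  simp only [skew_lt_mul_neg_one_pow_mul_skew_lt_of_lt hij, sum_add_distrib, sum_sub_distrib,
    sum_neg_distrib, sum_range_ite_lt _ (by omega : j + 1 ≤ n),
    sum_range_ite_lt _ (by omega : i ≤ n), sum_range_ite_lt _ (by omega : j ≤ n),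
    sum_range_ite_lt _ (by omega : i + 1 ≤ n),
    neg_one_geom_sum, Nat.even_add_one, hn]
  split_ifs <;> norm_num

theorem sum_skew_lt_mul_neg_one_pow_mul_skew_lt {n i j : ℕ} (hn : Even n) (hi : i < n)
    (hj : j < n) :
    ∑ k ∈ range n, σ i k * (-1) ^ k * σ k j = if i = j then (-1) ^ i else 0 := by
  rcases lt_trichotomy i j with hij | rfl | hji
  · rw [sum_skew_lt_mul_neg_one_pow_mul_skew_lt_of_lt hn hij hj, if_neg hij.ne]
  · simp only [skew_lt_mul_neg_one_pow_mul_skew_lt_self, sum_add_distrib, sum_sub_distrib,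
      sum_neg_distrib, sum_range_ite_lt _ (by omega : i + 1 ≤ n), sum_range_ite_lt _ hi.le,
      neg_one_geom_sum, hn, sum_range_succ]
    simp
  · have hσ : ∀ a b, σ a b = -σ b a := fun a b =>
      congrFun₂ (skew_transpose_of_asymm fun (a b : ℕ) (h : a < b) => h.asymm) b a
    calc ∑ k ∈ range n, σ i k * (-1) ^ k * σ k j = ∑ k ∈ range n, σ j k * (-1) ^ k * σ k i :=
          sum_congr rfl fun k _ => by rw [hσ i k, hσ k j]; ring
      _ = if i = j then (-1) ^ i else 0 := by
          rw [sum_skew_lt_mul_neg_one_pow_mul_skew_lt_of_lt hn hji hi, if_neg hji.ne']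

end NatSkew

section Transitive

variable {n : ℕ}

local notation "T" => skew fun i j : Fin n => i < j

def altSign (n : ℕ) : Matrix (Fin n) (Fin n) ℤ := diagonal fun i => (-1) ^ (i : ℕ)

theorem altSign_mul_mul_altSign_apply (A : Matrix (Fin n) (Fin n) ℤ) (i j : Fin n) :
    (altSign n * A * altSign n) i j = (-1) ^ (i : ℕ) * A i j * (-1) ^ (j : ℕ) := by
  simp [altSign, diagonal_mul, mul_diagonal]

theorem altSign_mul_self : altSign n * altSign n = 1 := by
  simp [altSign, diagonal_mul_diagonal, ← mul_pow]

theorem skew_lt_mul_altSign_mul_skew_lt (hn : Even n) : T * altSign n * T = altSign n := by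
  ext i j
  rw [mul_apply, altSign]
  simp only [mul_diagonal, diagonal_apply, Fin.ext_iff]
  exact (Fin.sum_univ_eq_sum_range (fun k => (skew fun a b : ℕ => a < b) i k * (-1) ^ k *
    (skew fun a b : ℕ => a < b) k j) n).trans
    (sum_skew_lt_mul_neg_one_pow_mul_skew_lt hn i.isLt j.isLt)

theorem skew_lt_mul_altSign_conj (hn : Even n) : T * (altSign n * T * altSign n) = 1 := by
  rw [← Matrix.mul_assoc, ← Matrix.mul_assoc, skew_lt_mul_altSign_mul_skew_lt hn, altSign_mul_self]

theorem transpose_altSign_conj_skew_lt :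
    (altSign n * T * altSign n)ᵀ = -(altSign n * T * altSign n) := by
  rw [transpose_mul, transpose_mul, altSign, diagonal_transpose,
    skew_transpose_of_asymm fun (a b : Fin n) (h : a < b) => h.asymm]
  simp [Matrix.mul_assoc]

theorem det_skew_lt_of_even (hn : Even n) : (T).det = 1 := by
  obtain ⟨m, rfl⟩ := hn
  rw [← two_mul]
  exact det_skew_lt_fin_two_mul m

end Transitive

section LTournament

variable (n : ℕ)

def lastVec : Fin n → ℤ := fun k => if (k : ℕ) = n - 1 then 1 else 0

def reversalVec : Fin n → ℤ := fun k => if (k : ℕ) % 2 = 0 then -2 else 0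

theorem skew_LRel : skew (LRel n) = (skew fun i j : Fin n => i < j)
    + vecMulVec (reversalVec n) (lastVec n) - vecMulVec (lastVec n) (reversalVec n) := by
  ext i j
  have := i.isLt
  have := j.isLt
  simp only [skew, LRel, of_apply, Matrix.add_apply, Matrix.sub_apply, vecMulVec_apply,
    reversalVec, lastVec, Fin.lt_def, mul_ite, ite_mul, mul_one, one_mul, mul_zero, zero_mul]
  split_ifs <;> omega

variable {n}

theorem lastVec_dotProduct_altSign_conj_mulVec_reversalVec (hn : Even n) :
    lastVec n ⬝ᵥ (altSign n * (skew fun i j : Fin n => i < j) * altSign n) *ᵥ reversalVec n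
      = -n := by
  rcases n.eq_zero_or_pos with rfl | hpos
  · simp
  let z : Fin n := ⟨n - 1, by omega⟩
  have hz : (-1 : ℤ) ^ (z : ℕ) = -1 := (Nat.Even.sub_odd hpos hn odd_one).neg_one_pow
  have hlast : lastVec n = Pi.single z 1 := by
    ext k
    simp [lastVec, Pi.single_apply, Fin.ext_iff, z]
  have hentry : ∀ j : Fin n, (altSign n * (skew fun i j : Fin n => i < j) * altSign n) z j
      * reversalVec n j = -1 - (-1) ^ (j : ℕ) := by
    intro j
    rw [altSign_mul_mul_altSign_apply]
    rcases Nat.even_or_odd (j : ℕ) with hj | hj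
    · have hjz : j < z := by
        change (j : ℕ) < n - 1
        have := j.isLt; have := Nat.even_iff.mp hj; have := Nat.even_iff.mp hn; omega
      simp [hj.neg_one_pow, hz, skew, reversalVec, Nat.even_iff.mp hj, hjz, hjz.asymm]
    · simp [hj.neg_one_pow, reversalVec, Nat.odd_iff.mp hj]
  rw [hlast, single_one_dotProduct, mulVec, dotProduct]
  simp only [hentry, sum_sub_distrib]
  rw [Fin.sum_univ_eq_sum_range (fun k => (-1 : ℤ) ^ k), neg_one_geom_sum, if_pos hn]
  simp

end LTournament

theorem tdet_LRel {n : ℕ} (hn : Even n) : tdet (LRel n) = ((n : ℤ) - 1) ^ 2 := by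
  rw [tdet, skew_LRel, det_add_vecMulVec_sub_vecMulVec (skew_lt_mul_altSign_conj hn)
    transpose_altSign_conj_skew_lt, det_skew_lt_of_even hn,
    lastVec_dotProduct_altSign_conj_mulVec_reversalVec hn]
  ring

theorem stmt17 :
    (∀ n : ℕ, Even n → 4 ≤ n →
      tdet (LRel n) = tdet (LRel (n - 2)) + 4 * ((n : ℤ) - 2)) ∧
    (∀ n : ℕ, Even n → 2 ≤ n → tdet (LRel n) = ((n : ℤ) - 1) ^ 2) := by
  refine ⟨fun n hn h4 => ?_, fun n hn _ => tdet_LRel hn⟩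
  have hn2 : Even (n - 2) := (Nat.even_sub (by omega)).mpr (by simp [hn])
  rw [tdet_LRel hn, tdet_LRel hn2, Nat.cast_sub (by omega)]
  ring
end
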